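/- arXiv:1904.12465 — 11 statements merged into one kernel-verified Lean document; each statement's English description precedes it below -/
import Mathlib

section
/- Let f, g be preimpurity functions on [0,1] (continuous on [0,1], C^3 on (0,1), with f'' < 0 and g'' < 0 on (0,1)). Let 0 ≤ a₁ < a₂ < b₁ < b₂ ≤ 1, and suppose f(a₁)=g(a₁)=f(b₁)=g(b₁)=0. If f''/g'' is monotone increasing on (a₁,b₂), then f(a₂)/g(a₂) ≤ f(b₂)/g(b₂). (Note g(a₂) > 0 and g(b₂) < 0 by strict concavity.) -/
def Preimpurity (f : ℝ → ℝ) : Prop :=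
  ContinuousOn f (Set.Icc 0 1) ∧ ContDiffOn ℝ 3 f (Set.Ioo 0 1) ∧
  ∀ p ∈ Set.Ioo (0:ℝ) 1, deriv (deriv f) p < 0

/-- A strictly concave function nonpositive at two points is positive strictly between them. -/
lemma aux_pos {g : ℝ → ℝ} (hc : StrictConcaveOn ℝ (Set.Icc (0:ℝ) 1) g)
    {x y z : ℝ} (hx : x ∈ Set.Icc (0:ℝ) 1) (hz : z ∈ Set.Icc (0:ℝ) 1)
    (hxy : x < y) (hyz : y < z) (h0x : g x = 0) (h0z : g z = 0) : 0 < g y := by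
  have hxz : x < z := hxy.trans hyz
  have hd : (0:ℝ) < z - x := by linarith
  set t := (z - y) / (z - x) with ht_def
  set s := (y - x) / (z - x) with hs_def
  have ht : 0 < t := div_pos (by linarith) hd
  have hs : 0 < s := div_pos (by linarith) hd
  have hts : t + s = 1 := by rw [ht_def, hs_def]; field_simp; ring
  have hcomb : t • x + s • z = y := by
    simp only [smul_eq_mul, ht_def, hs_def]
    field_simp
    ring
  have hlt := hc.2 hx hz hxz.ne ht hs hts
  rw [hcomb] at hlt
  simp only [smul_eq_mul, h0x, h0z, mul_zero, add_zero, zero_add] at hlt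
  exact hlt

/-- A strictly concave function vanishing at x < y (nonpositive at y) is negative after y. -/
lemma aux_neg {g : ℝ → ℝ} (hc : StrictConcaveOn ℝ (Set.Icc (0:ℝ) 1) g)
    {x y z : ℝ} (hx : x ∈ Set.Icc (0:ℝ) 1) (hz : z ∈ Set.Icc (0:ℝ) 1)
    (hxy : x < y) (hyz : y < z) (h0x : g x = 0) (h0y : g y ≤ 0) : g z < 0 := by
  have hxz : x < z := hxy.trans hyz
  have hd : (0:ℝ) < z - x := by linarith
  set t := (z - y) / (z - x) with ht_def
  set s := (y - x) / (z - x) with hs_def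
  have ht : 0 < t := div_pos (by linarith) hd
  have hs : 0 < s := div_pos (by linarith) hd
  have hts : t + s = 1 := by rw [ht_def, hs_def]; field_simp; ring
  have hcomb : t • x + s • z = y := by
    simp only [smul_eq_mul, ht_def, hs_def]
    field_simp
    ring
  have hlt := hc.2 hx hz hxz.ne ht hs hts
  rw [hcomb] at hlt
  simp only [smul_eq_mul, h0x, mul_zero, zero_add] at hlt
  by_contra hcon
  push_neg at hcon
  nlinarith [mul_nonneg hs.le hcon]

theorem stmt1 (f g : ℝ → ℝ) (hf : Preimpurity f) (hg : Preimpurity g)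
    (a₁ a₂ b₁ b₂ : ℝ) (h0 : 0 ≤ a₁) (h1 : a₁ < a₂) (h2 : a₂ < b₁) (h3 : b₁ < b₂) (h4 : b₂ ≤ 1)
    (hfa : f a₁ = 0) (hga : g a₁ = 0) (hfb : f b₁ = 0) (hgb : g b₁ = 0)
    (hmono : MonotoneOn (fun p => deriv (deriv f) p / deriv (deriv g) p) (Set.Ioo a₁ b₂)) :
    f a₂ / g a₂ ≤ f b₂ / g b₂ := by
  obtain ⟨fc, fd, f2⟩ := hf
  obtain ⟨gc, gd, g2⟩ := hg
  -- membership facts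
  have hma₁ : a₁ ∈ Set.Icc (0:ℝ) 1 := ⟨h0, by linarith⟩
  have hmb₁ : b₁ ∈ Set.Icc (0:ℝ) 1 := ⟨by linarith, by linarith⟩
  have hmb₂ : b₂ ∈ Set.Icc (0:ℝ) 1 := ⟨by linarith, h4⟩
  have hIoo : Set.Ioo a₁ b₂ ⊆ Set.Ioo (0:ℝ) 1 := Set.Ioo_subset_Ioo h0 h4
  -- strict concavity of g
  have hgconc : StrictConcaveOn ℝ (Set.Icc (0:ℝ) 1) g := by
    apply strictConcaveOn_of_deriv2_neg (convex_Icc 0 1) gc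
    intro x hx
    rw [interior_Icc] at hx
    simpa [Function.iterate_succ, Function.comp] using g2 x hx
  -- sign facts for g
  have hga₂ : 0 < g a₂ := aux_pos hgconc hma₁ hmb₁ h1 h2 hga hgb
  have hgb₂ : g b₂ < 0 := aux_neg hgconc hma₁ hmb₂ (h1.trans h2) h3 hga (le_of_eq hgb)
  set L := f a₂ / g a₂ with hLdef
  -- differentiability setup
  have fd1 : DifferentiableOn ℝ f (Set.Ioo (0:ℝ) 1) := fd.differentiableOn (by norm_num)
  have gd1 : DifferentiableOn ℝ g (Set.Ioo (0:ℝ) 1) := gd.differentiableOn (by norm_num)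
  have fd' : ContDiffOn ℝ 2 (deriv f) (Set.Ioo (0:ℝ) 1) :=
    fd.deriv_of_isOpen isOpen_Ioo (by norm_num)
  have gd' : ContDiffOn ℝ 2 (deriv g) (Set.Ioo (0:ℝ) 1) :=
    gd.deriv_of_isOpen isOpen_Ioo (by norm_num)
  have fd2 : DifferentiableOn ℝ (deriv f) (Set.Ioo (0:ℝ) 1) := fd'.differentiableOn (by norm_num)
  have gd2 : DifferentiableOn ℝ (deriv g) (Set.Ioo (0:ℝ) 1) := gd'.differentiableOn (by norm_num)
  have Hh1 : ∀ x ∈ Set.Ioo (0:ℝ) 1,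
      HasDerivAt (fun y => f y - L * g y) (deriv f x - L * deriv g x) x := by
    intro x hx
    exact ((fd1.differentiableAt (isOpen_Ioo.mem_nhds hx)).hasDerivAt).sub
      (((gd1.differentiableAt (isOpen_Ioo.mem_nhds hx)).hasDerivAt).const_mul L)
  have Hh2 : ∀ x ∈ Set.Ioo (0:ℝ) 1,
      HasDerivAt (fun y => deriv f y - L * deriv g y)
        (deriv (deriv f) x - L * deriv (deriv g) x) x := by
    intro x hx
    exact ((fd2.differentiableAt (isOpen_Ioo.mem_nhds hx)).hasDerivAt).sub
      (((gd2.differentiableAt (isOpen_Ioo.mem_nhds hx)).hasDerivAt).const_mul L)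
  -- continuity of h and h'
  have hcont : ContinuousOn (fun y => f y - L * g y) (Set.Icc (0:ℝ) 1) :=
    fc.sub (continuousOn_const.mul gc)
  have h1cont : ContinuousOn (fun y => deriv f y - L * deriv g y) (Set.Ioo (0:ℝ) 1) :=
    fd'.continuousOn.sub (continuousOn_const.mul gd'.continuousOn)
  -- zeros of h
  have hha₁ : f a₁ - L * g a₁ = 0 := by rw [hfa, hga]; ring
  have hha₂ : f a₂ - L * g a₂ = 0 := by rw [hLdef]; field_simp; ring
  have hhb₁ : f b₁ - L * g b₁ = 0 := by rw [hfb, hgb]; ring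
  -- Rolle twice
  obtain ⟨c₁, hc₁, hc₁0⟩ : ∃ c ∈ Set.Ioo a₁ a₂, deriv f c - L * deriv g c = 0 := by
    apply exists_hasDerivAt_eq_zero h1
      (hcont.mono (Set.Icc_subset_Icc h0 (by linarith))) (by rw [hha₁, hha₂])
    intro x hx
    exact Hh1 x (hIoo ⟨hx.1, by linarith [hx.2]⟩)
  obtain ⟨c₂, hc₂, hc₂0⟩ : ∃ c ∈ Set.Ioo a₂ b₁, deriv f c - L * deriv g c = 0 := by
    apply exists_hasDerivAt_eq_zero h2
      (hcont.mono (Set.Icc_subset_Icc (by linarith) (by linarith))) (by rw [hha₂, hhb₁])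
    intro x hx
    exact Hh1 x (hIoo ⟨by linarith [hx.1], by linarith [hx.2]⟩)
  have hc₁c₂ : c₁ < c₂ := hc₁.2.trans hc₂.1
  have hc₁mem : c₁ ∈ Set.Ioo a₁ b₂ := ⟨hc₁.1, by linarith [hc₁.2]⟩
  have hc₂mem : c₂ ∈ Set.Ioo a₂ b₁ := hc₂
  obtain ⟨c₃, hc₃, hc₃0⟩ : ∃ c ∈ Set.Ioo c₁ c₂,
      deriv (deriv f) c - L * deriv (deriv g) c = 0 := by
    apply exists_hasDerivAt_eq_zero hc₁c₂
      (h1cont.mono (Set.Icc_subset_Ioo (by linarith [hc₁.1]) (by linarith [hc₂.2])))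
      (by rw [hc₁0, hc₂0])
    intro x hx
    exact Hh2 x (hIoo ⟨by linarith [hx.1, hc₁.1], by linarith [hx.2, hc₂.2]⟩)
  have hc₃mem : c₃ ∈ Set.Ioo a₁ b₂ :=
    ⟨by linarith [hc₃.1, hc₁.1], by linarith [hc₃.2, hc₂.2]⟩
  -- at c₃ the ratio of second derivatives equals L
  have hg2c₃ : deriv (deriv g) c₃ < 0 := g2 c₃ (hIoo hc₃mem)
  have hrc₃ : deriv (deriv f) c₃ / deriv (deriv g) c₃ = L := by
    have : deriv (deriv f) c₃ = L * deriv (deriv g) c₃ := by linarith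
    rw [this, mul_div_assoc, div_self hg2c₃.ne, mul_one]
  -- key: second derivative of h is nonpositive right of c₃
  have key : ∀ x ∈ Set.Ioo a₁ b₂, c₃ ≤ x →
      deriv (deriv f) x - L * deriv (deriv g) x ≤ 0 := by
    intro x hx hcx
    have hr : deriv (deriv f) c₃ / deriv (deriv g) c₃ ≤
        deriv (deriv f) x / deriv (deriv g) x := hmono hc₃mem hx hcx
    rw [hrc₃] at hr
    have hg2x : deriv (deriv g) x < 0 := g2 x (hIoo hx)
    rw [le_div_iff_of_neg hg2x] at hr
    linarith
  -- h' is antitone on [c₂, b₂)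
  have hanti1 : AntitoneOn (fun y => deriv f y - L * deriv g y) (Set.Ico c₂ b₂) := by
    apply antitoneOn_of_deriv_nonpos (convex_Ico c₂ b₂)
    · exact h1cont.mono (fun x hx => hIoo ⟨by linarith [hx.1, hc₂.1], hx.2⟩)
    · rw [interior_Ico]
      intro x hx
      exact ((Hh2 x (hIoo ⟨by linarith [hx.1, hc₂.1], hx.2⟩)).differentiableAt).differentiableWithinAt
    · rw [interior_Ico]
      intro x hx
      have hxmem : x ∈ Set.Ioo a₁ b₂ := ⟨by linarith [hx.1, hc₂.1], hx.2⟩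
      rw [(Hh2 x (hIoo hxmem)).deriv]
      exact key x hxmem (by linarith [hx.1, hc₃.2])
  -- hence h' ≤ 0 on (b₁, b₂)
  have h1le : ∀ x ∈ Set.Ioo b₁ b₂, deriv f x - L * deriv g x ≤ 0 := by
    intro x hx
    have h1 : deriv f x - L * deriv g x ≤ deriv f c₂ - L * deriv g c₂ :=
      hanti1 ⟨le_refl c₂, by linarith [hc₂.2]⟩
        ⟨by linarith [hx.1, hc₂.2], hx.2⟩ (by linarith [hx.1, hc₂.2])
    linarith
  -- h is antitone on [b₁, b₂]
  have hanti2 : AntitoneOn (fun y => f y - L * g y) (Set.Icc b₁ b₂) := by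
    apply antitoneOn_of_deriv_nonpos (convex_Icc b₁ b₂)
    · exact hcont.mono (Set.Icc_subset_Icc (by linarith) h4)
    · rw [interior_Icc]
      intro x hx
      exact ((Hh1 x (hIoo ⟨by linarith [hx.1], hx.2⟩)).differentiableAt).differentiableWithinAt
    · rw [interior_Icc]
      intro x hx
      rw [(Hh1 x (hIoo ⟨by linarith [hx.1], hx.2⟩)).deriv]
      exact h1le x hx
  have hfin : f b₂ - L * g b₂ ≤ 0 := by
    have h5 : f b₂ - L * g b₂ ≤ f b₁ - L * g b₁ :=
      hanti2 ⟨le_refl b₁, h3.le⟩ ⟨h3.le, le_refl b₂⟩ h3.le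
    linarith
  show L ≤ f b₂ / g b₂
  rw [le_div_iff_of_neg hgb₂]
  linarith
end

section
/- Let f, g be preimpurity functions and suppose f''/g'' is strictly decreasing on some open subinterval (a,b) of [0,1]. Then there exist a₁ < a₂ < c < b₁ < b₂ in [0,1] such that ((b₂-c)/(b₂-a₂))·g(a₂) + ((c-a₂)/(b₂-a₂))·g(b₂) < ((b₁-c)/(b₁-a₁))·g(a₁) + ((c-a₁)/(b₁-a₁))·g(b₁) while ((b₂-c)/(b₂-a₂))·f(a₂) + ((c-a₂)/(b₂-a₂))·f(b₂) > ((b₁-c)/(b₁-a₁))·f(a₁) + ((c-a₁)/(b₁-a₁))·f(b₁); i.e., f does not split more positively purely than g. -/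
open Set

lemma reg3 {h : ℝ → ℝ} (hh : ContDiffOn ℝ 3 h (Set.Ioo 0 1)) :
    (∀ t ∈ Set.Ioo (0:ℝ) 1, HasDerivAt h (deriv h t) t) ∧
    (∀ t ∈ Set.Ioo (0:ℝ) 1, HasDerivAt (deriv h) (deriv (deriv h) t) t) ∧
    (∀ t ∈ Set.Ioo (0:ℝ) 1, HasDerivAt (deriv (deriv h)) (deriv (deriv (deriv h)) t) t) ∧
    ContinuousOn (deriv (deriv (deriv h))) (Set.Ioo 0 1) := by
  have hO : IsOpen (Set.Ioo (0:ℝ) 1) := isOpen_Ioo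
  have h1 : ContDiffOn ℝ 2 (deriv h) (Set.Ioo 0 1) := hh.deriv_of_isOpen hO (by norm_num)
  have h2 : ContDiffOn ℝ 1 (deriv (deriv h)) (Set.Ioo 0 1) := h1.deriv_of_isOpen hO (by norm_num)
  have h3 : ContDiffOn ℝ 0 (deriv (deriv (deriv h))) (Set.Ioo 0 1) :=
    h2.deriv_of_isOpen hO (by norm_num)
  refine ⟨fun t ht => ?_, fun t ht => ?_, fun t ht => ?_, h3.continuousOn⟩
  · exact ((hh.differentiableOn (by norm_num)).differentiableAt (hO.mem_nhds ht)).hasDerivAt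
  · exact ((h1.differentiableOn (by norm_num)).differentiableAt (hO.mem_nhds ht)).hasDerivAt
  · exact ((h2.differentiableOn (by norm_num)).differentiableAt (hO.mem_nhds ht)).hasDerivAt

lemma taylor3 {h : ℝ → ℝ} (hh : ContDiffOn ℝ 3 h (Set.Ioo 0 1)) {p x : ℝ}
    (hp : 0 < p) (hpx : p < x) (hx : x < 1) :
    ∃ ξ ∈ Set.Ioo p x, h x = h p + deriv h p * (x - p) + deriv (deriv h) p * (x - p)^2 / 2
      + deriv (deriv (deriv h)) ξ * (x - p)^3 / 6 := by
  obtain ⟨d1, d2, d3, c3⟩ := reg3 hh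
  have hsub : Set.Icc p x ⊆ Set.Ioo 0 1 :=
    fun t ht => ⟨lt_of_lt_of_le hp ht.1, lt_of_le_of_lt ht.2 hx⟩
  have hsub' : Set.Ioo p x ⊆ Set.Ioo 0 1 := fun t ht => hsub ⟨le_of_lt ht.1, le_of_lt ht.2⟩
  have hxp3 : (x - p)^3 ≠ 0 := pow_ne_zero _ (sub_ne_zero.2 (ne_of_gt hpx))
  set M : ℝ := (6*(h x - h p) - 6*(deriv h p * (x - p)) - 3*(deriv (deriv h) p * (x - p)^2))
      / (x - p)^3 with hMdef
  set φ : ℝ → ℝ := fun t => 6*(h x - h t) - 6*(deriv h t * (x - t))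
      - 3*(deriv (deriv h) t * (x - t)^2) - M*(x - t)^3 with hφdef
  have hφp : φ p = 0 := by
    rw [hφdef, hMdef]
    field_simp
    rw [div_self (sub_ne_zero.2 (ne_of_gt hpx)), sub_self, mul_zero]
  have hφx : φ x = 0 := by rw [hφdef]; ring
  have ch : ContinuousOn h (Set.Icc p x) :=
    fun t ht => ((d1 t (hsub ht)).differentiableAt.continuousAt).continuousWithinAt
  have ch1 : ContinuousOn (deriv h) (Set.Icc p x) :=
    fun t ht => ((d2 t (hsub ht)).differentiableAt.continuousAt).continuousWithinAt
  have ch2 : ContinuousOn (deriv (deriv h)) (Set.Icc p x) :=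
    fun t ht => ((d3 t (hsub ht)).differentiableAt.continuousAt).continuousWithinAt
  have cφ : ContinuousOn φ (Set.Icc p x) := by
    rw [hφdef]
    exact (((continuousOn_const.mul (continuousOn_const.sub ch)).sub
      (continuousOn_const.mul (ch1.mul ((continuous_const.sub continuous_id).continuousOn)))).sub
      (continuousOn_const.mul (ch2.mul (((continuous_const.sub continuous_id).pow 2).continuousOn)))).sub
      (continuousOn_const.mul (((continuous_const.sub continuous_id).pow 3).continuousOn))
  have hφ' : ∀ t ∈ Set.Ioo p x,
      HasDerivAt φ (3*(M - deriv (deriv (deriv h)) t)*(x - t)^2) t := by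
    intro t ht
    have hid : HasDerivAt (fun s : ℝ => x - s) (-1) t := (hasDerivAt_id t).const_sub x
    have h1 : HasDerivAt (fun s => 6*(h x - h s)) (6 * (-(deriv h t))) t :=
      ((d1 t (hsub' ht)).const_sub (h x)).const_mul 6
    have h2 : HasDerivAt (fun s => 6*(deriv h s * (x - s)))
        (6 * (deriv (deriv h) t * (x - t) + deriv h t * (-1))) t :=
      ((d2 t (hsub' ht)).mul hid).const_mul 6
    have h3 : HasDerivAt (fun s => 3*(deriv (deriv h) s * (x - s)^2))
        (3 * (deriv (deriv (deriv h)) t * (x - t)^2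
          + deriv (deriv h) t * ((2:ℕ) * (x - t)^1 * (-1)))) t :=
      ((d3 t (hsub' ht)).mul (hid.pow 2)).const_mul 3
    have h4 : HasDerivAt (fun s => M*(x - s)^3) (M * ((3:ℕ) * (x - t)^2 * (-1))) t :=
      (hid.pow 3).const_mul M
    have := ((h1.sub h2).sub h3).sub h4
    rw [hφdef]
    refine HasDerivAt.congr_deriv this ?_
    push_cast
    ring
  obtain ⟨ξ, hξmem, hξ⟩ := exists_hasDerivAt_eq_zero hpx cφ (hφp.trans hφx.symm) hφ'
  refine ⟨ξ, hξmem, ?_⟩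
  have hxξ : (x - ξ)^2 ≠ 0 := pow_ne_zero _ (sub_ne_zero.2 (ne_of_gt hξmem.2))
  have hMξ : M = deriv (deriv (deriv h)) ξ := by
    rcases mul_eq_zero.1 hξ with h' | h'
    · rcases mul_eq_zero.1 h' with h'' | h''
      · norm_num at h''
      · linarith [sub_eq_zero.1 h'']
    · exact absurd h' hxξ
  have hM : M * (x - p)^3 = 6*(h x - h p) - 6*(deriv h p * (x - p))
      - 3*(deriv (deriv h) p * (x - p)^2) := by
    rw [hMdef]; field_simp
    exact mul_div_cancel_left₀ _ (sub_ne_zero.2 (ne_of_gt hpx))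
  rw [← hMξ]
  linarith

lemma exists_pt (f g : ℝ → ℝ) (hf : Preimpurity f) (hg : Preimpurity g)
    (a b : ℝ) (hab : a < b) (ha : 0 ≤ a) (hb : b ≤ 1)
    (hanti : StrictAntiOn (fun p => deriv (deriv f) p / deriv (deriv g) p) (Set.Ioo a b)) :
    ∃ p ∈ Set.Ioo a b,
      deriv (deriv (deriv f)) p * deriv (deriv g) p
        < deriv (deriv f) p * deriv (deriv (deriv g)) p := by
  obtain ⟨_, _, d2f, _⟩ := reg3 hf.2.1
  obtain ⟨_, _, d2g, _⟩ := reg3 hg.2.1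
  have hsub : Set.Ioo a b ⊆ Set.Ioo (0:ℝ) 1 :=
    fun t ht => ⟨lt_of_le_of_lt ha ht.1, lt_of_lt_of_le ht.2 hb⟩
  by_contra hcon
  push_neg at hcon
  have hr : ∀ p ∈ Set.Ioo a b,
      HasDerivAt (fun q => deriv (deriv f) q / deriv (deriv g) q)
        ((deriv (deriv (deriv f)) p * deriv (deriv g) p
          - deriv (deriv f) p * deriv (deriv (deriv g)) p) / (deriv (deriv g) p)^2) p :=
    fun p hp => (d2f p (hsub hp)).div (d2g p (hsub hp)) (ne_of_lt (hg.2.2 p (hsub hp)))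
  have hmono : MonotoneOn (fun p => deriv (deriv f) p / deriv (deriv g) p) (Set.Ioo a b) := by
    apply monotoneOn_of_deriv_nonneg (convex_Ioo a b)
    · exact fun p hp => (hr p hp).differentiableAt.continuousAt.continuousWithinAt
    · rw [interior_Ioo]
      exact fun p hp => (hr p hp).differentiableAt.differentiableWithinAt
    · intro p hp
      rw [interior_Ioo] at hp
      rw [(hr p hp).deriv]
      apply div_nonneg
      · linarith [hcon p hp]
      · positivity
  have hm1 : a + (b-a)/3 ∈ Set.Ioo a b := by constructor <;> nlinarith
  have hm2 : a + (b-a)*2/3 ∈ Set.Ioo a b := by constructor <;> nlinarith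
  have h1 := hmono hm1 hm2 (by nlinarith)
  have h2 := hanti hm1 hm2 (by nlinarith)
  simp only at h1 h2
  linarith

lemma bracket_pos {D E S T T' μ θ₁ θ₂ θ₃ : ℝ} (hE0 : 0 < E)
    (hDEu : D*E ≤ 1/8) (hDEl : -(1/8) ≤ D*E)
    (hμ0 : 0 < μ) (hμf : μ ≤ 3/16*D*S + T/128)
    (hEμ : E*(D^2 + T^2 + T'^2 + 1) ≤ μ)
    (h1l : -(μ/2) < θ₁ - T) (h1u : θ₁ - T < μ/2)
    (h2l : -(μ/2) < θ₂ - T) (h2u : θ₂ - T < μ/2)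
    (h3l : -(μ/2) < θ₃ - T) (h3u : θ₃ - T < μ/2) :
    0 < 3/16*D*S + 1/6*((1/2 - D*E)*(1/64)*θ₁ + (1/4 + D*E)*θ₂ - (1/2 + D*E)*(27/64)*θ₃) := by
  have k1 : (1/2 - D*E)*(1/64)*(θ₁ - T) ≥ -(μ/2) := by
    nlinarith [mul_nonneg (by linarith : (0:ℝ) ≤ (1/2 - D*E)*(1/64))
        (by linarith : (0:ℝ) ≤ θ₁ - T + μ/2),
      mul_nonneg (by linarith : (0:ℝ) ≤ 1 - (1/2 - D*E)*(1/64)) (by linarith : (0:ℝ) ≤ μ/2)]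
  have k2 : (1/4 + D*E)*(θ₂ - T) ≥ -(μ/2) := by
    nlinarith [mul_nonneg (by linarith : (0:ℝ) ≤ 1/4 + D*E)
        (by linarith : (0:ℝ) ≤ θ₂ - T + μ/2),
      mul_nonneg (by linarith : (0:ℝ) ≤ 1 - (1/4 + D*E)) (by linarith : (0:ℝ) ≤ μ/2)]
  have k3 : -((1/2 + D*E)*(27/64)*(θ₃ - T)) ≥ -(μ/2) := by
    nlinarith [mul_nonneg (by linarith : (0:ℝ) ≤ (1/2 + D*E)*(27/64))
        (by linarith : (0:ℝ) ≤ μ/2 - (θ₃ - T)),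
      mul_nonneg (by linarith : (0:ℝ) ≤ 1 - (1/2 + D*E)*(27/64)) (by linarith : (0:ℝ) ≤ μ/2)]
  have k4 : 3/32*(D*E)*T ≥ -(3/64*μ) := by
    nlinarith [mul_nonneg hE0.le (sq_nonneg (D + T)), mul_nonneg hE0.le (sq_nonneg T'), hE0.le]
  linarith [k1, k2, k3, k4]

set_option maxHeartbeats 1000000 in
theorem stmt4 (f g : ℝ → ℝ) (hf : Preimpurity f) (hg : Preimpurity g)
    (a b : ℝ) (hab : a < b) (ha : 0 ≤ a) (hb : b ≤ 1)
    (hanti : StrictAntiOn (fun p => deriv (deriv f) p / deriv (deriv g) p) (Set.Ioo a b)) :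
    ∃ a₁ a₂ c b₁ b₂ : ℝ, 0 ≤ a₁ ∧ a₁ < a₂ ∧ a₂ < c ∧ c < b₁ ∧ b₁ < b₂ ∧ b₂ ≤ 1 ∧
      ((b₂ - c)/(b₂ - a₂) * g a₂ + (c - a₂)/(b₂ - a₂) * g b₂
        < (b₁ - c)/(b₁ - a₁) * g a₁ + (c - a₁)/(b₁ - a₁) * g b₁) ∧
      ((b₂ - c)/(b₂ - a₂) * f a₂ + (c - a₂)/(b₂ - a₂) * f b₂
        > (b₁ - c)/(b₁ - a₁) * f a₁ + (c - a₁)/(b₁ - a₁) * f b₁) := by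
  obtain ⟨p, hpmem, hkey⟩ := exists_pt f g hf hg a b hab ha hb hanti
  have hp01 : p ∈ Set.Ioo (0:ℝ) 1 := ⟨lt_of_le_of_lt ha hpmem.1, lt_of_lt_of_le hpmem.2 hb⟩
  obtain ⟨_, _, _, c3f⟩ := reg3 hf.2.1
  obtain ⟨_, _, _, c3g⟩ := reg3 hg.2.1
  have hSf0 : deriv (deriv f) p < 0 := hf.2.2 p hp01
  have hSg0 : deriv (deriv g) p < 0 := hg.2.2 p hp01
  have hSfne : deriv (deriv f) p ≠ 0 := ne_of_lt hSf0
  have hSgne : deriv (deriv g) p ≠ 0 := ne_of_lt hSg0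
  -- choose the tuning parameter D
  obtain ⟨D, hMf0, hMg0⟩ : ∃ Dv : ℝ,
      0 < 3/16*Dv*(deriv (deriv f) p) + (deriv (deriv (deriv f)) p)/128 ∧
      3/16*Dv*(deriv (deriv g) p) + (deriv (deriv (deriv g)) p)/128 < 0 := by
    refine ⟨-((deriv (deriv (deriv g)) p)*(deriv (deriv f) p)
        + (deriv (deriv (deriv f)) p)*(deriv (deriv g) p))
        / (48*(deriv (deriv f) p)*(deriv (deriv g) p)), ?_, ?_⟩
    · have h1 : 3/16*(-((deriv (deriv (deriv g)) p)*(deriv (deriv f) p)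
          + (deriv (deriv (deriv f)) p)*(deriv (deriv g) p))
          / (48*(deriv (deriv f) p)*(deriv (deriv g) p)))*(deriv (deriv f) p)
          + (deriv (deriv (deriv f)) p)/128
          = ((deriv (deriv (deriv f)) p)*(deriv (deriv g) p)
            - (deriv (deriv (deriv g)) p)*(deriv (deriv f) p))/(256*(deriv (deriv g) p)) := by
        field_simp
        ring
      rw [h1]
      exact div_pos_of_neg_of_neg (by linarith) (by linarith)
    · have h1 : 3/16*(-((deriv (deriv (deriv g)) p)*(deriv (deriv f) p)
          + (deriv (deriv (deriv f)) p)*(deriv (deriv g) p))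
          / (48*(deriv (deriv f) p)*(deriv (deriv g) p)))*(deriv (deriv g) p)
          + (deriv (deriv (deriv g)) p)/128
          = ((deriv (deriv (deriv g)) p)*(deriv (deriv f) p)
            - (deriv (deriv (deriv f)) p)*(deriv (deriv g) p))/(256*(deriv (deriv f) p)) := by
        field_simp
        ring
      rw [h1]
      exact div_neg_of_pos_of_neg (by linarith) (by linarith)
  -- margin
  obtain ⟨μ, hμ0, hμf, hμg⟩ : ∃ m : ℝ, 0 < m ∧
      m ≤ 3/16*D*(deriv (deriv f) p) + (deriv (deriv (deriv f)) p)/128 ∧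
      3/16*D*(deriv (deriv g) p) + (deriv (deriv (deriv g)) p)/128 ≤ -m := by
    refine ⟨min (3/16*D*(deriv (deriv f) p) + (deriv (deriv (deriv f)) p)/128)
      (-(3/16*D*(deriv (deriv g) p) + (deriv (deriv (deriv g)) p)/128)),
      lt_min hMf0 (by linarith), min_le_left _ _, ?_⟩
    have := min_le_right (3/16*D*(deriv (deriv f) p) + (deriv (deriv (deriv f)) p)/128)
      (-(3/16*D*(deriv (deriv g) p) + (deriv (deriv (deriv g)) p)/128))
    linarith
  -- continuity of the third derivatives at p
  have hF3 : ContinuousAt (deriv (deriv (deriv f))) p :=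
    (c3f p hp01).continuousAt (isOpen_Ioo.mem_nhds hp01)
  have hG3 : ContinuousAt (deriv (deriv (deriv g))) p :=
    (c3g p hp01).continuousAt (isOpen_Ioo.mem_nhds hp01)
  have hev : ∀ᶠ ξ in nhds p,
      |deriv (deriv (deriv f)) ξ - deriv (deriv (deriv f)) p| < μ/2 ∧
      |deriv (deriv (deriv g)) ξ - deriv (deriv (deriv g)) p| < μ/2 := by
    have e1 := hF3 (Metric.ball_mem_nhds (deriv (deriv (deriv f)) p) (by positivity : (0:ℝ) < μ/2))
    have e2 := hG3 (Metric.ball_mem_nhds (deriv (deriv (deriv g)) p) (by positivity : (0:ℝ) < μ/2))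
    filter_upwards [e1, e2] with ξ h1 h2
    simp only [Set.mem_preimage, Metric.mem_ball, Real.dist_eq] at h1 h2
    exact ⟨h1, h2⟩
  obtain ⟨ρ, hρ0, hρ⟩ := Metric.eventually_nhds_iff_ball.1 hev
  -- choose the scale E
  obtain ⟨E, hE0, hEb, hEρ, hDEu, hDEl, hEμ⟩ : ∃ E : ℝ, 0 < E ∧ p + E < b ∧ E < ρ ∧
      D*E ≤ 1/8 ∧ -(1/8) ≤ D*E ∧
      E*(D^2 + (deriv (deriv (deriv f)) p)^2 + (deriv (deriv (deriv g)) p)^2 + 1) ≤ μ := by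
    have hbp : 0 < b - p := by linarith [hpmem.2]
    have hq : (0:ℝ) < D^2 + (deriv (deriv (deriv f)) p)^2 + (deriv (deriv (deriv g)) p)^2 + 1 := by
      positivity
    have hq8 : (0:ℝ) < 8*(|D|+1) := by positivity
    set E := min (min ((b-p)/2) (ρ/2)) (min (1/(8*(|D|+1)))
      (μ/(D^2 + (deriv (deriv (deriv f)) p)^2 + (deriv (deriv (deriv g)) p)^2 + 1))) with hE
    have hE0 : 0 < E :=
      lt_min (lt_min (by linarith) (by linarith)) (lt_min (by positivity) (by positivity))
    have h1 : E ≤ (b-p)/2 := (min_le_left _ _).trans (min_le_left _ _)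
    have h2 : E ≤ ρ/2 := (min_le_left _ _).trans (min_le_right _ _)
    have h3 : E ≤ 1/(8*(|D|+1)) := (min_le_right _ _).trans (min_le_left _ _)
    have h4 : E ≤ μ/(D^2 + (deriv (deriv (deriv f)) p)^2 + (deriv (deriv (deriv g)) p)^2 + 1) :=
      (min_le_right _ _).trans (min_le_right _ _)
    rw [le_div_iff₀ hq8] at h3
    rw [le_div_iff₀ hq] at h4
    have habs1 : D*E ≤ 1/8 := by
      nlinarith [mul_nonneg (sub_nonneg.2 (le_abs_self D)) hE0.le, abs_nonneg D]
    have habs2 : -(1/8) ≤ D*E := by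
      nlinarith [mul_nonneg (sub_nonneg.2 (neg_abs_le D)) hE0.le, abs_nonneg D]
    exact ⟨E, hE0, by linarith, by linarith, habs1, habs2, by linarith⟩
  have hpE1 : p + E < 1 := by linarith [hpmem.2, hb]
  -- Taylor expansions for f
  obtain ⟨ξ₁, hξ₁, t1⟩ := taylor3 hf.2.1 hp01.1 (show p < p + E/4 by linarith)
    (show p + E/4 < 1 by linarith)
  obtain ⟨ξ₂, hξ₂, t2⟩ := taylor3 hf.2.1 hp01.1 (show p < p + E by linarith) hpE1
  obtain ⟨ξ₃, hξ₃, t3⟩ := taylor3 hf.2.1 hp01.1 (show p < p + 3*E/4 by linarith)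
    (show p + 3*E/4 < 1 by linarith)
  obtain ⟨ζ₁, hζ₁, u1⟩ := taylor3 hg.2.1 hp01.1 (show p < p + E/4 by linarith)
    (show p + E/4 < 1 by linarith)
  obtain ⟨ζ₂, hζ₂, u2⟩ := taylor3 hg.2.1 hp01.1 (show p < p + E by linarith) hpE1
  obtain ⟨ζ₃, hζ₃, u3⟩ := taylor3 hg.2.1 hp01.1 (show p < p + 3*E/4 by linarith)
    (show p + 3*E/4 < 1 by linarith)
  -- bounds on third derivatives at the intermediate points
  have hball : ∀ ξ : ℝ, p < ξ → ξ < p + E → ξ ∈ Metric.ball p ρ := by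
    intro ξ h1 h2
    rw [Metric.mem_ball, Real.dist_eq, abs_of_pos (by linarith : (0:ℝ) < ξ - p)]
    linarith
  have B1 := abs_lt.1 (hρ ξ₁ (hball ξ₁ hξ₁.1 (by linarith [hξ₁.2]))).1
  have B2 := abs_lt.1 (hρ ξ₂ (hball ξ₂ hξ₂.1 (by linarith [hξ₂.2]))).1
  have B3 := abs_lt.1 (hρ ξ₃ (hball ξ₃ hξ₃.1 (by linarith [hξ₃.2]))).1
  have C1 := abs_lt.1 (hρ ζ₁ (hball ζ₁ hζ₁.1 (by linarith [hζ₁.2]))).2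
  have C2 := abs_lt.1 (hρ ζ₂ (hball ζ₂ hζ₂.1 (by linarith [hζ₂.2]))).2
  have C3 := abs_lt.1 (hρ ζ₃ (hball ζ₃ hζ₃.1 (by linarith [hζ₃.2]))).2
  -- the two expansion identities
  have expandf : ((p + E) - (p + (1/2 + D*E)*E)) * f (p + E/4)
      + ((p + (1/2 + D*E)*E) - (p + E/4)) * f (p + E)
      - (((p + 3*E/4) - (p + (1/2 + D*E)*E)) * f p
        + ((p + (1/2 + D*E)*E) - p) * f (p + 3*E/4))
      = E^4 * (3/16*D*(deriv (deriv f) p)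
        + 1/6*((1/2 - D*E)*(1/64)*(deriv (deriv (deriv f)) ξ₁)
          + (1/4 + D*E)*(deriv (deriv (deriv f)) ξ₂)
          - (1/2 + D*E)*(27/64)*(deriv (deriv (deriv f)) ξ₃))) := by
    linear_combination ((1/2 - D*E)*E) * t1 + ((1/4 + D*E)*E) * t2 - ((1/2 + D*E)*E) * t3
  have expandg : ((p + E) - (p + (1/2 + D*E)*E)) * g (p + E/4)
      + ((p + (1/2 + D*E)*E) - (p + E/4)) * g (p + E)
      - (((p + 3*E/4) - (p + (1/2 + D*E)*E)) * g p
        + ((p + (1/2 + D*E)*E) - p) * g (p + 3*E/4))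
      = E^4 * (3/16*D*(deriv (deriv g) p)
        + 1/6*((1/2 - D*E)*(1/64)*(deriv (deriv (deriv g)) ζ₁)
          + (1/4 + D*E)*(deriv (deriv (deriv g)) ζ₂)
          - (1/2 + D*E)*(27/64)*(deriv (deriv (deriv g)) ζ₃))) := by
    linear_combination ((1/2 - D*E)*E) * u1 + ((1/4 + D*E)*E) * u2 - ((1/2 + D*E)*E) * u3
  -- positivity of the bracket for f
  have hBf : 0 < 3/16*D*(deriv (deriv f) p)
      + 1/6*((1/2 - D*E)*(1/64)*(deriv (deriv (deriv f)) ξ₁)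
        + (1/4 + D*E)*(deriv (deriv (deriv f)) ξ₂)
        - (1/2 + D*E)*(27/64)*(deriv (deriv (deriv f)) ξ₃)) :=
    bracket_pos hE0 hDEu hDEl hμ0 hμf hEμ B1.1 B1.2 B2.1 B2.2 B3.1 B3.2
  -- negativity of the bracket for g
  have hBg : 3/16*D*(deriv (deriv g) p)
      + 1/6*((1/2 - D*E)*(1/64)*(deriv (deriv (deriv g)) ζ₁)
        + (1/4 + D*E)*(deriv (deriv (deriv g)) ζ₂)
        - (1/2 + D*E)*(27/64)*(deriv (deriv (deriv g)) ζ₃)) < 0 := by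
    have hpos := bracket_pos (D := D) (E := E) (S := -(deriv (deriv g) p))
      (T := -(deriv (deriv (deriv g)) p)) (T' := deriv (deriv (deriv f)) p)
      (μ := μ) (θ₁ := -(deriv (deriv (deriv g)) ζ₁)) (θ₂ := -(deriv (deriv (deriv g)) ζ₂))
      (θ₃ := -(deriv (deriv (deriv g)) ζ₃))
      hE0 hDEu hDEl hμ0 (by linarith only [hμg]) (by linarith only [hEμ])
      (by linarith only [C1.2]) (by linarith only [C1.1])
      (by linarith only [C2.2]) (by linarith only [C2.1])
      (by linarith only [C3.2]) (by linarith only [C3.1])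
    linarith only [hpos]
  -- assemble
  refine ⟨p, p + E/4, p + (1/2 + D*E)*E, p + 3*E/4, p + E,
    le_of_lt (lt_of_le_of_lt ha hpmem.1), by linarith only [hE0], ?_, ?_,
    by linarith only [hE0], by linarith only [hEb, hb], ?_, ?_⟩
  · linarith only [mul_pos (show (0:ℝ) < 1/4 + D*E by linarith only [hDEl]) hE0]
  · linarith only [mul_pos (show (0:ℝ) < 1/4 - D*E by linarith only [hDEu]) hE0]
  · -- g inequality
    have hlt : ((p + E) - (p + (1/2 + D*E)*E)) * g (p + E/4)
        + ((p + (1/2 + D*E)*E) - (p + E/4)) * g (p + E)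
        < ((p + 3*E/4) - (p + (1/2 + D*E)*E)) * g p
        + ((p + (1/2 + D*E)*E) - p) * g (p + 3*E/4) := by
      linarith only [expandg, mul_neg_of_pos_of_neg (pow_pos hE0 4) hBg]
    rw [show p + E - (p + E/4) = 3*E/4 from by ring, show p + 3*E/4 - p = 3*E/4 from by ring,
      div_mul_eq_mul_div, div_mul_eq_mul_div, div_mul_eq_mul_div, div_mul_eq_mul_div,
      ← add_div, ← add_div,
      div_lt_div_iff₀ (by linarith only [hE0] : (0:ℝ) < 3*E/4) (by linarith only [hE0] : (0:ℝ) < 3*E/4)]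
    exact mul_lt_mul_of_pos_right hlt (by linarith only [hE0])
  · -- f inequality
    have hlt : ((p + 3*E/4) - (p + (1/2 + D*E)*E)) * f p
        + ((p + (1/2 + D*E)*E) - p) * f (p + 3*E/4)
        < ((p + E) - (p + (1/2 + D*E)*E)) * f (p + E/4)
        + ((p + (1/2 + D*E)*E) - (p + E/4)) * f (p + E) := by
      linarith only [expandf, mul_pos (pow_pos hE0 4) hBf]
    rw [gt_iff_lt, show p + E - (p + E/4) = 3*E/4 from by ring,
      show p + 3*E/4 - p = 3*E/4 from by ring,
      div_mul_eq_mul_div, div_mul_eq_mul_div, div_mul_eq_mul_div, div_mul_eq_mul_div,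
      ← add_div, ← add_div,
      div_lt_div_iff₀ (by linarith only [hE0] : (0:ℝ) < 3*E/4) (by linarith only [hE0] : (0:ℝ) < 3*E/4)]
    exact mul_lt_mul_of_pos_right hlt (by linarith only [hE0])
end

section
/- Let f, g be preimpurity functions, c in (0,1), and suppose (a₁,b₁), (a₂,b₂) are two splits with 0 ≤ aᵢ < c < bᵢ ≤ 1. Suppose the split impurity of (a₁,b₁) with respect to g is ≤ that of (a₂,b₂), and the split impurity of (a₂,b₂) with respect to f is ≤ that of (a₁,b₁), with at least one inequality strict (so (a₁,b₁) is optimal for g and (a₂,b₂) is optimal for f in a strict sense). If b₂ > b₁, then a₂ > a₁. -/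
theorem stmt5 (f g : ℝ → ℝ) (hf : Preimpurity f) (hg : Preimpurity g)
    (c : ℝ) (hc : c ∈ Set.Ioo (0:ℝ) 1)
    (a₁ b₁ a₂ b₂ : ℝ)
    (ha₁ : 0 ≤ a₁) (ha₁c : a₁ < c) (hb₁c : c < b₁) (hb₁ : b₁ ≤ 1)
    (ha₂ : 0 ≤ a₂) (ha₂c : a₂ < c) (hb₂c : c < b₂) (hb₂ : b₂ ≤ 1)
    (hg1 : (b₁ - c)/(b₁ - a₁) * g a₁ + (c - a₁)/(b₁ - a₁) * g b₁
      ≤ (b₂ - c)/(b₂ - a₂) * g a₂ + (c - a₂)/(b₂ - a₂) * g b₂)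
    (hf2 : (b₂ - c)/(b₂ - a₂) * f a₂ + (c - a₂)/(b₂ - a₂) * f b₂
      ≤ (b₁ - c)/(b₁ - a₁) * f a₁ + (c - a₁)/(b₁ - a₁) * f b₁)
    (hstrict : (b₁ - c)/(b₁ - a₁) * g a₁ + (c - a₁)/(b₁ - a₁) * g b₁
        < (b₂ - c)/(b₂ - a₂) * g a₂ + (c - a₂)/(b₂ - a₂) * g b₂
      ∨ (b₂ - c)/(b₂ - a₂) * f a₂ + (c - a₂)/(b₂ - a₂) * f b₂
        < (b₁ - c)/(b₁ - a₁) * f a₁ + (c - a₁)/(b₁ - a₁) * f b₁)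
    (hbb : b₁ < b₂) :
    a₁ < a₂ := by
  by_contra hcon
  push_neg at hcon
  -- g is strictly concave on [0,1]
  have hconc : StrictConcaveOn ℝ (Set.Icc 0 1) g := by
    apply strictConcaveOn_of_deriv2_neg (convex_Icc 0 1) hg.1
    intro x hx
    rw [interior_Icc] at hx
    simpa [Function.iterate_succ, Function.comp] using hg.2.2 x hx
  have ha2b1 : a₂ < b₁ := lt_trans ha₂c hb₁c
  have ha2a1 : a₂ ≤ a₁ := hcon
  have hd2 : (0:ℝ) < b₂ - a₂ := by linarith
  have hd1 : (0:ℝ) < b₁ - a₁ := by linarith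
  have ha2m : a₂ ∈ Set.Icc (0:ℝ) 1 := ⟨ha₂, by linarith⟩
  have hb2m : b₂ ∈ Set.Icc (0:ℝ) 1 := ⟨by linarith, hb₂⟩
  have hne : a₂ ≠ b₂ := by linarith
  -- chord bound at b₁ (strict)
  have hB : (b₂ - b₁)/(b₂ - a₂) * g a₂ + (b₁ - a₂)/(b₂ - a₂) * g b₂ < g b₁ := by
    have := hconc.2 ha2m hb2m hne
      (show (0:ℝ) < (b₂ - b₁)/(b₂ - a₂) from div_pos (by linarith) hd2)
      (show (0:ℝ) < (b₁ - a₂)/(b₂ - a₂) from div_pos (by linarith) hd2)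
      (by field_simp; ring)
    have hpt : ((b₂ - b₁)/(b₂ - a₂)) • a₂ + ((b₁ - a₂)/(b₂ - a₂)) • b₂ = b₁ := by
      rw [smul_eq_mul, smul_eq_mul, div_mul_eq_mul_div, div_mul_eq_mul_div,
        ← add_div, div_eq_iff hd2.ne']
      ring
    rw [hpt] at this
    simpa [smul_eq_mul] using this
  -- chord bound at a₁ (non-strict)
  have hA : (b₂ - a₁)/(b₂ - a₂) * g a₂ + (a₁ - a₂)/(b₂ - a₂) * g b₂ ≤ g a₁ := by
    have := hconc.concaveOn.2 ha2m hb2m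
      (show (0:ℝ) ≤ (b₂ - a₁)/(b₂ - a₂) from div_nonneg (by linarith) hd2.le)
      (show (0:ℝ) ≤ (a₁ - a₂)/(b₂ - a₂) from div_nonneg (by linarith) hd2.le)
      (by field_simp; ring)
    have hpt : ((b₂ - a₁)/(b₂ - a₂)) • a₂ + ((a₁ - a₂)/(b₂ - a₂)) • b₂ = a₁ := by
      rw [smul_eq_mul, smul_eq_mul, div_mul_eq_mul_div, div_mul_eq_mul_div,
        ← add_div, div_eq_iff hd2.ne']
      ring
    rw [hpt] at this
    simpa [smul_eq_mul] using this
  have hp : (0:ℝ) < (b₁ - c)/(b₁ - a₁) := div_pos (by linarith) hd1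
  have hq : (0:ℝ) < (c - a₁)/(b₁ - a₁) := div_pos (by linarith) hd1
  have key : (b₂ - c)/(b₂ - a₂) * g a₂ + (c - a₂)/(b₂ - a₂) * g b₂
      < (b₁ - c)/(b₁ - a₁) * g a₁ + (c - a₁)/(b₁ - a₁) * g b₁ := by
    have h1 : (b₁ - c)/(b₁ - a₁) * ((b₂ - a₁)/(b₂ - a₂) * g a₂ + (a₁ - a₂)/(b₂ - a₂) * g b₂)
        + (c - a₁)/(b₁ - a₁) * ((b₂ - b₁)/(b₂ - a₂) * g a₂ + (b₁ - a₂)/(b₂ - a₂) * g b₂)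
        < (b₁ - c)/(b₁ - a₁) * g a₁ + (c - a₁)/(b₁ - a₁) * g b₁ := by
      have := add_lt_add_of_le_of_lt
        (mul_le_mul_of_nonneg_left hA hp.le)
        (mul_lt_mul_of_pos_left hB hq)
      linarith
    have h2 : (b₁ - c)/(b₁ - a₁) * ((b₂ - a₁)/(b₂ - a₂) * g a₂ + (a₁ - a₂)/(b₂ - a₂) * g b₂)
        + (c - a₁)/(b₁ - a₁) * ((b₂ - b₁)/(b₂ - a₂) * g a₂ + (b₁ - a₂)/(b₂ - a₂) * g b₂)
        = (b₂ - c)/(b₂ - a₂) * g a₂ + (c - a₂)/(b₂ - a₂) * g b₂ := by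
      field_simp
      ring
    linarith
  linarith
end

section
/- Let f, g be preimpurity functions on [0,1]. If both f''/g'' and g''/f'' are monotone increasing on (0,1), then f''/g'' is constant, and hence there exist constants A > 0, B, C with f(x) = A·g(x) + B·x + C for all x in [0,1]. -/
theorem stmt6 (f g : ℝ → ℝ) (hf : Preimpurity f) (hg : Preimpurity g)
    (hfg : MonotoneOn (fun p => deriv (deriv f) p / deriv (deriv g) p) (Set.Ioo 0 1))
    (hgf : MonotoneOn (fun p => deriv (deriv g) p / deriv (deriv f) p) (Set.Ioo 0 1)) :
    (∃ k : ℝ, ∀ p ∈ Set.Ioo (0:ℝ) 1, deriv (deriv f) p / deriv (deriv g) p = k) ∧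
    (∃ A B C : ℝ, 0 < A ∧ ∀ x ∈ Set.Icc (0:ℝ) 1, f x = A * g x + B * x + C) := by
  obtain ⟨hfc, hfd, hf2⟩ := hf
  obtain ⟨hgc, hgd, hg2⟩ := hg
  set F2 := deriv (deriv f) with hF2
  set G2 := deriv (deriv g) with hG2
  have hhalf : (1/2 : ℝ) ∈ Set.Ioo (0:ℝ) 1 := by norm_num
  -- the ratio is constant
  have key : ∀ p ∈ Set.Ioo (0:ℝ) 1, ∀ q ∈ Set.Ioo (0:ℝ) 1, p ≤ q →
      F2 p / G2 p = F2 q / G2 q := by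
    intro p hp q hq hpq
    have h1 := hfg hp hq hpq
    have h2 := hgf hp hq hpq
    simp only at h1 h2
    have rp : 0 < F2 p / G2 p := div_pos_of_neg_of_neg (hf2 p hp) (hg2 p hp)
    have rq : 0 < F2 q / G2 q := div_pos_of_neg_of_neg (hf2 q hq) (hg2 q hq)
    have h2' : (F2 p / G2 p)⁻¹ ≤ (F2 q / G2 q)⁻¹ := by
      rw [inv_div, inv_div]; exact h2
    exact le_antisymm h1 ((inv_le_inv₀ rp rq).mp h2')
  set k := F2 (1/2) / G2 (1/2) with hk
  have hconst : ∀ p ∈ Set.Ioo (0:ℝ) 1, F2 p / G2 p = k := by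
    intro p hp
    rcases le_total p (1/2) with h | h
    · exact key p hp (1/2) hhalf h
    · exact (key (1/2) hhalf p hp h).symm
  have hkpos : 0 < k := div_pos_of_neg_of_neg (hf2 _ hhalf) (hg2 _ hhalf)
  refine ⟨⟨k, hconst⟩, ?_⟩
  -- F2 = k * G2 on Ioo
  have hF2eq : ∀ p ∈ Set.Ioo (0:ℝ) 1, F2 p = k * G2 p := by
    intro p hp
    have := hconst p hp
    have hgne : G2 p ≠ 0 := ne_of_lt (hg2 p hp)
    field_simp at this
    linarith [this]
  have hopen : IsOpen (Set.Ioo (0:ℝ) 1) := isOpen_Ioo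
  -- differentiability facts
  have hfd1 : DifferentiableOn ℝ f (Set.Ioo 0 1) := hfd.differentiableOn (by norm_num)
  have hgd1 : DifferentiableOn ℝ g (Set.Ioo 0 1) := hgd.differentiableOn (by norm_num)
  have hfd2 : ContDiffOn ℝ 2 (deriv f) (Set.Ioo 0 1) :=
    hfd.deriv_of_isOpen hopen (by norm_num)
  have hgd2 : ContDiffOn ℝ 2 (deriv g) (Set.Ioo 0 1) :=
    hgd.deriv_of_isOpen hopen (by norm_num)
  have hfd2' : DifferentiableOn ℝ (deriv f) (Set.Ioo 0 1) := hfd2.differentiableOn (by norm_num)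
  have hgd2' : DifferentiableOn ℝ (deriv g) (Set.Ioo 0 1) := hgd2.differentiableOn (by norm_num)
  set h : ℝ → ℝ := fun x => f x - k * g x with hh
  have hmem : ∀ p ∈ Set.Ioo (0:ℝ) 1, Set.Ioo (0:ℝ) 1 ∈ nhds p :=
    fun p hp => hopen.mem_nhds hp
  have hfatd : ∀ p ∈ Set.Ioo (0:ℝ) 1, DifferentiableAt ℝ f p :=
    fun p hp => (hfd1 p hp).differentiableAt (hmem p hp)
  have hgatd : ∀ p ∈ Set.Ioo (0:ℝ) 1, DifferentiableAt ℝ g p :=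
    fun p hp => (hgd1 p hp).differentiableAt (hmem p hp)
  have hfatd' : ∀ p ∈ Set.Ioo (0:ℝ) 1, DifferentiableAt ℝ (deriv f) p :=
    fun p hp => (hfd2' p hp).differentiableAt (hmem p hp)
  have hgatd' : ∀ p ∈ Set.Ioo (0:ℝ) 1, DifferentiableAt ℝ (deriv g) p :=
    fun p hp => (hgd2' p hp).differentiableAt (hmem p hp)
  -- deriv h = deriv f - k * deriv g on Ioo
  have hderivh : ∀ p ∈ Set.Ioo (0:ℝ) 1, deriv h p = deriv f p - k * deriv g p := by
    intro p hp
    rw [hh]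
    rw [deriv_fun_sub (hfatd p hp) ((hgatd p hp).const_mul k), deriv_const_mul k (hgatd p hp)]
  have hhd : ∀ p ∈ Set.Ioo (0:ℝ) 1, DifferentiableAt ℝ h p :=
    fun p hp => (hfatd p hp).sub ((hgatd p hp).const_mul k)
  -- deriv (deriv h) = 0 on Ioo
  have hderiv2h : ∀ p ∈ Set.Ioo (0:ℝ) 1, deriv (deriv h) p = 0 := by
    intro p hp
    have heq : deriv h =ᶠ[nhds p] (fun x => deriv f x - k * deriv g x) := by
      filter_upwards [hmem p hp] with x hx using hderivh x hx
    rw [heq.deriv_eq]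
    rw [deriv_fun_sub (hfatd' p hp) ((hgatd' p hp).const_mul k), deriv_const_mul k (hgatd' p hp)]
    have := hF2eq p hp
    rw [hF2, hG2] at this
    linarith [this]
  have hhd' : ∀ p ∈ Set.Ioo (0:ℝ) 1, DifferentiableAt ℝ (deriv h) p := by
    intro p hp
    have heq : deriv h =ᶠ[nhds p] (fun x => deriv f x - k * deriv g x) := by
      filter_upwards [hmem p hp] with x hx using hderivh x hx
    exact ((hfatd' p hp).sub ((hgatd' p hp).const_mul k)).congr_of_eventuallyEq heq
  -- a general constancy lemma on Ioo
  have const_on : ∀ u : ℝ → ℝ, (∀ p ∈ Set.Ioo (0:ℝ) 1, DifferentiableAt ℝ u p) →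
      (∀ p ∈ Set.Ioo (0:ℝ) 1, deriv u p = 0) →
      ∀ p ∈ Set.Ioo (0:ℝ) 1, ∀ q ∈ Set.Ioo (0:ℝ) 1, u p = u q := by
    intro u hud hud0 p hp q hq
    have hconv : Convex ℝ (Set.Ioo (0:ℝ) 1) := convex_Ioo 0 1
    refine hconv.is_const_of_fderivWithin_eq_zero
      (fun x hx => (hud x hx).differentiableWithinAt) ?_ hp hq
    intro x hx
    rw [fderivWithin_of_isOpen hopen hx]
    have h0 : HasDerivAt u 0 x := by
      have := (hud x hx).hasDerivAt
      rwa [hud0 x hx] at this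
    rw [h0.hasFDerivAt.fderiv]
    ext
    simp
  -- deriv h is constant on Ioo
  set B := deriv h (1/2) with hB
  have hderivhconst : ∀ p ∈ Set.Ioo (0:ℝ) 1, deriv h p = B :=
    fun p hp => const_on (deriv h) hhd' hderiv2h p hp (1/2) hhalf
  -- h x - B * x is constant on Ioo
  set u : ℝ → ℝ := fun x => h x - B * x with hu
  have hud : ∀ p ∈ Set.Ioo (0:ℝ) 1, DifferentiableAt ℝ u p :=
    fun p hp => (hhd p hp).sub ((differentiableAt_id.const_mul B))
  have hud0 : ∀ p ∈ Set.Ioo (0:ℝ) 1, deriv u p = 0 := by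
    intro p hp
    rw [hu]
    rw [deriv_fun_sub (hhd p hp) (differentiableAt_fun_id.const_mul B),
      deriv_const_mul B differentiableAt_fun_id, deriv_id'', hderivhconst p hp]
    ring
  set C := u (1/2) with hC
  have hIoo : ∀ p ∈ Set.Ioo (0:ℝ) 1, h p = B * p + C := by
    intro p hp
    have := const_on u hud hud0 p hp (1/2) hhalf
    rw [hu] at this
    simp only at this
    have hC' : C = h (1/2) - B * (1/2) := by rw [hC, hu]
    linear_combination this + hC'
  -- extend to the closed interval by continuity
  have hcont : ContinuousOn h (Set.Icc 0 1) := hfc.sub (hgc.const_smul k)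
  have hend : ∀ x ∈ ({0, 1} : Set ℝ), h x = B * x + C := by
    intro x hx
    have hxIcc : x ∈ Set.Icc (0:ℝ) 1 := by
      rcases hx with rfl | hx
      · exact Set.left_mem_Icc.mpr (by norm_num)
      · simp only [Set.mem_singleton_iff] at hx; subst hx
        exact Set.right_mem_Icc.mpr (by norm_num)
    have hxcl : x ∈ closure (Set.Ioo (0:ℝ) 1) := by
      rw [closure_Ioo (by norm_num : (0:ℝ) ≠ 1)]
      exact hxIcc
    have hne : (nhdsWithin x (Set.Ioo (0:ℝ) 1)).NeBot :=
      mem_closure_iff_nhdsWithin_neBot.mp hxcl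
    have ht1 : Filter.Tendsto h (nhdsWithin x (Set.Ioo (0:ℝ) 1)) (nhds (h x)) :=
      ((hcont x hxIcc).mono Set.Ioo_subset_Icc_self).tendsto
    have ht2 : Filter.Tendsto h (nhdsWithin x (Set.Ioo (0:ℝ) 1)) (nhds (B * x + C)) := by
      have : Filter.Tendsto (fun y => B * y + C) (nhdsWithin x (Set.Ioo (0:ℝ) 1))
          (nhds (B * x + C)) :=
        ((continuous_const.mul continuous_id).add continuous_const).continuousWithinAt.tendsto
      refine this.congr' ?_
      filter_upwards [self_mem_nhdsWithin] with y hy using (hIoo y hy).symm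
    exact tendsto_nhds_unique ht1 ht2
  refine ⟨k, B, C, hkpos, ?_⟩
  intro x hx
  have hhx : h x = B * x + C := by
    rcases lt_or_eq_of_le hx.1 with h0 | h0
    · rcases lt_or_eq_of_le hx.2 with h1 | h1
      · exact hIoo x ⟨h0, h1⟩
      · exact hend x (by simp [h1])
    · exact hend x (by simp [← h0])
  rw [hh] at hhx
  simp only at hhx
  linarith [hhx]
end

section
/- Let f, g be impurity functions (preimpurity functions with f(0)=f(1)=g(0)=g(1)=0) and suppose there exists an increasing function h on (0,1) with f'' = h·g'' (i.e., f splits more positively purely than g). Let m_f and m_g be the (unique) maximizers of f and g on [0,1]. Then m_f ≥ m_g. -/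
def Impurity (f : ℝ → ℝ) : Prop := Preimpurity f ∧ f 0 = 0 ∧ f 1 = 0

lemma impurity_interior_max (f : ℝ → ℝ) (hf : Impurity f) (m : ℝ)
    (hm : m ∈ Set.Icc (0:ℝ) 1) (hmax : ∀ x ∈ Set.Icc (0:ℝ) 1, f x ≤ f m) :
    m ∈ Set.Ioo (0:ℝ) 1 ∧ deriv f m = 0 := by
  obtain ⟨⟨hfc, hfd, hf2⟩, hf0, hf1⟩ := hf
  have hconc : StrictConcaveOn ℝ (Set.Icc 0 1) f := by
    apply strictConcaveOn_of_deriv2_neg (convex_Icc 0 1) hfc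
    intro x hx
    rw [interior_Icc] at hx
    exact hf2 x hx
  have hhalf : 0 < f (1/2 : ℝ) := by
    have := hconc.2 (show (0:ℝ) ∈ Set.Icc (0:ℝ) 1 by norm_num)
      (show (1:ℝ) ∈ Set.Icc (0:ℝ) 1 by norm_num) (by norm_num)
      (show (0:ℝ) < 1/2 by norm_num) (show (0:ℝ) < 1/2 by norm_num)
      (show (1/2 : ℝ) + 1/2 = 1 by norm_num)
    norm_num [hf0, hf1, smul_eq_mul] at this
    exact this
  have hmpos : 0 < f m := lt_of_lt_of_le hhalf (hmax _ (by norm_num))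
  have hio : m ∈ Set.Ioo (0:ℝ) 1 := by
    refine ⟨lt_of_le_of_ne hm.1 (fun he => ?_), lt_of_le_of_ne hm.2 (fun he => ?_)⟩
    · rw [← he, hf0] at hmpos; exact lt_irrefl _ hmpos
    · rw [he, hf1] at hmpos; exact lt_irrefl _ hmpos
  refine ⟨hio, ?_⟩
  have hlm : IsLocalMax f m :=
    Filter.eventually_of_mem (Icc_mem_nhds hio.1 hio.2) (fun x hx => hmax x hx)
  exact hlm.deriv_eq_zero

theorem stmt8 (f g : ℝ → ℝ) (hf : Impurity f) (hg : Impurity g)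
    (h : ℝ → ℝ) (hmono : MonotoneOn h (Set.Ioo 0 1))
    (hratio : ∀ p ∈ Set.Ioo (0:ℝ) 1, deriv (deriv f) p = h p * deriv (deriv g) p)
    (mf mg : ℝ) (hmf : mf ∈ Set.Icc (0:ℝ) 1) (hmg : mg ∈ Set.Icc (0:ℝ) 1)
    (hmaxf : ∀ x ∈ Set.Icc (0:ℝ) 1, f x ≤ f mf)
    (hmaxg : ∀ x ∈ Set.Icc (0:ℝ) 1, g x ≤ g mg) :
    mg ≤ mf := by
  by_contra hcon
  push_neg at hcon
  obtain ⟨hmfo, hdf0⟩ := impurity_interior_max f hf mf hmf hmaxf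
  obtain ⟨hmgo, hdg0⟩ := impurity_interior_max g hg mg hmg hmaxg
  obtain ⟨⟨hfc, hfd, hf2⟩, hf0, hf1⟩ := hf
  obtain ⟨⟨hgc, hgd, hg2⟩, hg0, hg1⟩ := hg
  have hio : IsOpen (Set.Ioo (0:ℝ) 1) := isOpen_Ioo
  -- differentiability
  have hfd1 : DifferentiableOn ℝ f (Set.Ioo 0 1) := hfd.differentiableOn (by norm_num)
  have hgd1 : DifferentiableOn ℝ g (Set.Ioo 0 1) := hgd.differentiableOn (by norm_num)
  have hfd2 : ContDiffOn ℝ 2 (deriv f) (Set.Ioo 0 1) := hfd.deriv_of_isOpen hio (by norm_num)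
  have hgd2 : ContDiffOn ℝ 2 (deriv g) (Set.Ioo 0 1) := hgd.deriv_of_isOpen hio (by norm_num)
  have hfat : ∀ x ∈ Set.Ioo (0:ℝ) 1, DifferentiableAt ℝ f x :=
    fun x hx => hfd1.differentiableAt (hio.mem_nhds hx)
  have hgat : ∀ x ∈ Set.Ioo (0:ℝ) 1, DifferentiableAt ℝ g x :=
    fun x hx => hgd1.differentiableAt (hio.mem_nhds hx)
  have hfat2 : ∀ x ∈ Set.Ioo (0:ℝ) 1, DifferentiableAt ℝ (deriv f) x :=
    fun x hx => (hfd2.differentiableOn (by norm_num)).differentiableAt (hio.mem_nhds hx)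
  have hgat2 : ∀ x ∈ Set.Ioo (0:ℝ) 1, DifferentiableAt ℝ (deriv g) x :=
    fun x hx => (hgd2.differentiableOn (by norm_num)).differentiableAt (hio.mem_nhds hx)
  -- deriv g is strictly decreasing
  have hganti : StrictAntiOn (deriv g) (Set.Ioo 0 1) := by
    apply strictAntiOn_of_deriv_neg (convex_Ioo 0 1) hgd2.continuousOn
    intro x hx
    rw [interior_Ioo] at hx
    exact hg2 x hx
  have hdgmf : 0 < deriv g mf := by
    have := hganti hmfo hmgo hcon
    rw [hdg0] at this
    exact this
  -- h mf > 0
  set c := h mf with hc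
  have hcpos : 0 < c := by
    have h1 := hf2 mf hmfo
    have h2 := hg2 mf hmfo
    have h3 := hratio mf hmfo
    nlinarith
  -- φ = f' - c g' has max at mf
  set φ : ℝ → ℝ := fun x => deriv f x - c * deriv g x with hφ
  have hφcont : ContinuousOn φ (Set.Ioo 0 1) :=
    hfd2.continuousOn.sub (hgd2.continuousOn.const_smul c)
  have hφdiff : DifferentiableOn ℝ φ (Set.Ioo 0 1) :=
    (hfd2.differentiableOn (by norm_num)).sub
      ((hgd2.differentiableOn (by norm_num)).const_mul c)
  have hφderiv : ∀ x ∈ Set.Ioo (0:ℝ) 1,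
      deriv φ x = (h x - c) * deriv (deriv g) x := by
    intro x hx
    have : deriv φ x = deriv (deriv f) x - c * deriv (deriv g) x := by
      rw [hφ, deriv_fun_sub (hfat2 x hx) ((hgat2 x hx).const_mul c),
        deriv_const_mul c (hgat2 x hx)]
    rw [this, hratio x hx]
    ring
  have hφmono : MonotoneOn φ (Set.Ioc 0 mf) := by
    apply monotoneOn_of_deriv_nonneg (convex_Ioc 0 mf)
      (hφcont.mono (fun x hx => ⟨hx.1, lt_of_le_of_lt hx.2 hmfo.2⟩))
      (by
        rw [interior_Ioc]
        exact hφdiff.mono (fun x hx => ⟨hx.1, lt_trans hx.2 hmfo.2⟩))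
    intro x hx
    rw [interior_Ioc] at hx
    have hx' : x ∈ Set.Ioo (0:ℝ) 1 := ⟨hx.1, lt_trans hx.2 hmfo.2⟩
    rw [hφderiv x hx']
    have hhx : h x ≤ c := hmono hx' hmfo (le_of_lt hx.2)
    have := hg2 x hx'
    nlinarith
  have hφanti : AntitoneOn φ (Set.Ico mf 1) := by
    apply antitoneOn_of_deriv_nonpos (convex_Ico mf 1)
      (hφcont.mono (fun x hx => ⟨lt_of_lt_of_le hmfo.1 hx.1, hx.2⟩))
      (by
        rw [interior_Ico]
        exact hφdiff.mono (fun x hx => ⟨lt_trans hmfo.1 hx.1, hx.2⟩))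
    intro x hx
    rw [interior_Ico] at hx
    have hx' : x ∈ Set.Ioo (0:ℝ) 1 := ⟨lt_trans hmfo.1 hx.1, hx.2⟩
    rw [hφderiv x hx']
    have hhx : c ≤ h x := hmono hmfo hx' (le_of_lt hx.1)
    have := hg2 x hx'
    nlinarith
  have hφmf : φ mf < 0 := by
    rw [hφ]
    simp only [hdf0]
    nlinarith
  have hφneg : ∀ x ∈ Set.Ioo (0:ℝ) 1, φ x < 0 := by
    intro x hx
    rcases le_total x mf with hxm | hxm
    · exact lt_of_le_of_lt (hφmono ⟨hx.1, hxm⟩ ⟨hmfo.1, le_refl mf⟩ hxm) hφmf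
    · exact lt_of_le_of_lt (hφanti ⟨le_refl mf, hmfo.2⟩ ⟨hxm, hx.2⟩ hxm) hφmf
  -- F = f - c g strictly decreasing on [0,1]
  have hF : StrictAntiOn (fun x => f x - c * g x) (Set.Icc 0 1) := by
    apply strictAntiOn_of_deriv_neg (convex_Icc 0 1) (hfc.sub (continuousOn_const.mul hgc))
    intro x hx
    rw [interior_Icc] at hx
    have : deriv (fun x => f x - c * g x) x = φ x := by
      rw [hφ, deriv_fun_sub (hfat x hx) ((hgat x hx).const_mul c),
        deriv_const_mul c (hgat x hx)]
    rw [show (f - (fun x => h mf) * g) = (fun x => f x - c * g x) from rfl, this]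
    exact hφneg x hx
  have := hF (Set.left_mem_Icc.mpr zero_le_one) (Set.right_mem_Icc.mpr zero_le_one)
    zero_lt_one
  simp [hf0, hf1, hg0, hg1] at this
end

section
/- For f(p) = p^5 - 5p^3 + 4p and g(p) = p - p^2 on [0,1]: both are impurity functions, the maximizer of f is ≥ the maximizer of g (indeed the maximizer of g is 1/2 and that of f is greater than 1/2), but f''/g'' is not monotone increasing on (0,1). (Counterexample to the converse of the maximizer-ordering corollary.) -/
lemma df1 : deriv (fun p : ℝ => p^5 - 5*p^3 + 4*p) = fun p => 5*p^4 - 15*p^2 + 4 := by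
  funext p
  have h : HasDerivAt (fun p : ℝ => p^5 - 5*p^3 + 4*p) (5*p^4 - 15*p^2 + 4) p := by
    have := ((hasDerivAt_pow 5 p).sub ((hasDerivAt_pow 3 p).const_mul 5)).add
      ((hasDerivAt_id p).const_mul 4)
    exact this.congr_deriv (by push_cast; ring)
  exact h.deriv

lemma df2 : deriv (deriv (fun p : ℝ => p^5 - 5*p^3 + 4*p)) = fun p => 20*p^3 - 30*p := by
  rw [df1]; funext p
  have h : HasDerivAt (fun p : ℝ => 5*p^4 - 15*p^2 + 4) (20*p^3 - 30*p) p := by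
    have := (((hasDerivAt_pow 4 p).const_mul 5).sub ((hasDerivAt_pow 2 p).const_mul 15)).add_const 4
    exact this.congr_deriv (by push_cast; ring)
  exact h.deriv

lemma dg1 : deriv (fun p : ℝ => p - p^2) = fun p => 1 - 2*p := by
  funext p
  have h : HasDerivAt (fun p : ℝ => p - p^2) (1 - 2*p) p := by
    have := (hasDerivAt_id p).sub (hasDerivAt_pow 2 p)
    exact this.congr_deriv (by push_cast; ring)
  exact h.deriv

lemma dg2 : deriv (deriv (fun p : ℝ => p - p^2)) = fun _ => -2 := by
  rw [dg1]; funext p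
  have h : HasDerivAt (fun p : ℝ => 1 - 2*p) (-2) p := by
    have := ((hasDerivAt_id p).const_mul 2).const_sub 1
    exact this.congr_deriv (by ring)
  exact h.deriv

theorem stmt9 :
    let f : ℝ → ℝ := fun p => p^5 - 5*p^3 + 4*p
    let g : ℝ → ℝ := fun p => p - p^2
    Impurity f ∧ Impurity g ∧
    (∀ x ∈ Set.Icc (0:ℝ) 1, g x ≤ g (1/2)) ∧
    (∃ m ∈ Set.Icc (0:ℝ) 1, 1/2 < m ∧ ∀ x ∈ Set.Icc (0:ℝ) 1, f x ≤ f m) ∧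
    ¬ MonotoneOn (fun p => deriv (deriv f) p / deriv (deriv g) p) (Set.Ioo 0 1) := by
  intro f g
  have hfc : Continuous f := by unfold f; continuity
  have hgc : Continuous g := by unfold g; continuity
  refine ⟨⟨⟨hfc.continuousOn, ?_, ?_⟩, by norm_num [f], by norm_num [f]⟩,
    ⟨⟨hgc.continuousOn, ?_, ?_⟩, by norm_num [g], by norm_num [g]⟩, ?_, ?_, ?_⟩
  · exact ((contDiff_id.pow 5).sub ((contDiff_id.pow 3).const_smul (5:ℝ)) |>.add
      (contDiff_id.const_smul (4:ℝ))).contDiffOn.congr (fun x _ => by simp [f])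
  · intro p hp
    rw [show f = (fun p : ℝ => p^5 - 5*p^3 + 4*p) from rfl, df2]
    show 20*p^3 - 30*p < 0
    obtain ⟨h0, h1⟩ := hp
    nlinarith [pow_pos h0 3, sq_nonneg p]
  · exact ((contDiff_id.sub (contDiff_id.pow 2))).contDiffOn.congr (fun x _ => by simp [g])
  · intro p hp
    rw [show g = (fun p : ℝ => p - p^2) from rfl, dg2]
    norm_num
  · intro x hx
    simp only [g]
    nlinarith [sq_nonneg (x - 1/2)]
  · -- maximizer of f
    obtain ⟨m, hm, hmax⟩ := (isCompact_Icc (a := (0:ℝ)) (b := 1)).exists_isMaxOn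
      (Set.nonempty_Icc.2 (by norm_num)) hfc.continuousOn
    refine ⟨m, hm, ?_, fun x hx => hmax hx⟩
    -- f strictly increasing on [0, 51/100]
    have hmono : StrictMonoOn f (Set.Icc (0:ℝ) (51/100)) := by
      apply strictMonoOn_of_deriv_pos (convex_Icc _ _) hfc.continuousOn
      intro x hx
      rw [interior_Icc] at hx
      rw [show f = (fun p : ℝ => p^5 - 5*p^3 + 4*p) from rfl, df1]
      show 0 < 5*x^4 - 15*x^2 + 4
      obtain ⟨h0, h1⟩ := hx
      nlinarith [pow_pos h0 4, sq_nonneg x]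
    by_contra hle
    push_neg at hle
    have h1 : f (1/2) < f (51/100) := hmono (by norm_num) (by norm_num) (by norm_num)
    have h2 : f m ≤ f (1/2) := by
      rcases eq_or_lt_of_le hle with h | h
      · rw [h]
      · exact le_of_lt (hmono ⟨hm.1, by linarith⟩ (by norm_num) h)
    have h3 : f (51/100) ≤ f m := hmax ⟨by norm_num, by norm_num⟩
    linarith
  · intro hmono
    have h := hmono (a := 1/2) (b := 9/10) (by norm_num) (by norm_num) (by norm_num)
    rw [show f = (fun p : ℝ => p^5 - 5*p^3 + 4*p) from rfl,
        show g = (fun p : ℝ => p - p^2) from rfl, df2, dg2] at h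
    norm_num at h
end

section
/- Let f be a preimpurity function and w > 0. Define (T_w f)(p) = (1 + (w-1)p)·f(φ_w(p)), where φ_w(p) = wp/(1+(w-1)p). Then for all c in (0,1) and all a, b with 0 ≤ a < c < b ≤ 1: (1+(w-1)c)·[ ((φ_w(b)-φ_w(c))/(φ_w(b)-φ_w(a)))·f(φ_w(a)) + ((φ_w(c)-φ_w(a))/(φ_w(b)-φ_w(a)))·f(φ_w(b)) ] = ((b-c)/(b-a))·(T_w f)(a) + ((c-a)/(b-a))·(T_w f)(b). (Class weighting by w is equivalent to replacing f by T_w f.) -/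
noncomputable def phiW (w p : ℝ) : ℝ := w * p / (1 + (w - 1) * p)

noncomputable def Tw (w : ℝ) (f : ℝ → ℝ) : ℝ → ℝ :=
  fun p => (1 + (w - 1) * p) * f (phiW w p)

theorem stmt11 (f : ℝ → ℝ) (hf : Preimpurity f) (w : ℝ) (hw : 0 < w)
    (c : ℝ) (hc : c ∈ Set.Ioo (0:ℝ) 1)
    (a b : ℝ) (ha : 0 ≤ a) (hac : a < c) (hcb : c < b) (hb : b ≤ 1) :
    (1 + (w - 1) * c) *
      ((phiW w b - phiW w c)/(phiW w b - phiW w a) * f (phiW w a)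
        + (phiW w c - phiW w a)/(phiW w b - phiW w a) * f (phiW w b))
    = (b - c)/(b - a) * Tw w f a + (c - a)/(b - a) * Tw w f b := by
  have hD : ∀ p : ℝ, 0 ≤ p → p ≤ 1 → 0 < 1 + (w - 1) * p := by
    intro p h0 h1
    nlinarith [mul_nonneg hw.le h0, mul_nonneg (by linarith : (0:ℝ) ≤ 1 - p) hw.le]
  have hDa := hD a ha (by linarith)
  have hDb := hD b (by linarith) hb
  have hDc := hD c (by linarith) (by linarith)
  have key : ∀ x y : ℝ, (1 + (w - 1) * x) ≠ 0 → (1 + (w - 1) * y) ≠ 0 →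
      phiW w x - phiW w y = w * (x - y) / ((1 + (w - 1) * x) * (1 + (w - 1) * y)) := by
    intro x y hx hy
    unfold phiW
    rw [div_sub_div _ _ hx hy]
    congr 1
    ring
  rw [key b c hDb.ne' hDc.ne', key b a hDb.ne' hDa.ne', key c a hDc.ne' hDa.ne']
  unfold Tw
  have hba : b - a ≠ 0 := by linarith
  field_simp
end

section
/- Let f be a preimpurity function and w > 0, and let T_w f(p) = (1+(w-1)p)·f(φ_w(p)) with φ_w(p)=wp/(1+(w-1)p). Then for all p in (0,1), (T_w f)''(p) = (w²/(1+(w-1)p)³)·f''(φ_w(p)). In particular (T_w f)'' < 0 on (0,1), so T_w f is a preimpurity function. -/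
private lemma Dpos {w : ℝ} (hw : 0 < w) {p : ℝ} (hp0 : 0 ≤ p) (hp1 : p ≤ 1) :
    0 < 1 + (w - 1) * p := by
  rcases hp0.lt_or_eq with h | h
  · nlinarith [mul_pos hw h]
  · nlinarith

private lemma phi_mem' {w : ℝ} (hw : 0 < w) {p : ℝ} (hp : p ∈ Set.Icc (0:ℝ) 1) :
    phiW w p ∈ Set.Icc (0:ℝ) 1 := by
  obtain ⟨hp0, hp1⟩ := hp
  have hD := Dpos hw hp0 hp1
  unfold phiW
  constructor
  · exact div_nonneg (mul_nonneg hw.le hp0) hD.le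
  · rw [div_le_one hD]; nlinarith

private lemma phi_mem {w : ℝ} (hw : 0 < w) {p : ℝ} (hp : p ∈ Set.Ioo (0:ℝ) 1) :
    phiW w p ∈ Set.Ioo (0:ℝ) 1 := by
  obtain ⟨hp0, hp1⟩ := hp
  have hD := Dpos hw hp0.le hp1.le
  unfold phiW
  constructor
  · exact div_pos (mul_pos hw hp0) hD
  · rw [div_lt_one hD]; nlinarith

private lemma lin_hasDeriv (w p : ℝ) :
    HasDerivAt (fun p : ℝ => 1 + (w - 1) * p) (w - 1) p := by
  simpa using ((hasDerivAt_id p).const_mul (w - 1)).const_add 1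

private lemma phi_hasDeriv {w : ℝ} {p : ℝ} (hD : 0 < 1 + (w - 1) * p) :
    HasDerivAt (phiW w) (w / (1 + (w - 1) * p) ^ 2) p := by
  have h1 : HasDerivAt (fun p : ℝ => w * p) w p := by
    simpa using (hasDerivAt_id p).const_mul w
  have h := h1.div (lin_hasDeriv w p) hD.ne'
  refine HasDerivAt.congr_deriv (f := phiW w) h ?_
  field_simp
  ring

theorem stmt12 (f : ℝ → ℝ) (hf : Preimpurity f) (w : ℝ) (hw : 0 < w) :
    (∀ p ∈ Set.Ioo (0:ℝ) 1,
      deriv (deriv (Tw w f)) p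
        = w^2 / (1 + (w - 1) * p)^3 * deriv (deriv f) (phiW w p)) ∧
    (∀ p ∈ Set.Ioo (0:ℝ) 1, deriv (deriv (Tw w f)) p < 0) ∧
    Preimpurity (Tw w f) := by
  obtain ⟨hf_cont, hf_cd, hf_cc⟩ := hf
  have hopen : IsOpen (Set.Ioo (0:ℝ) 1) := isOpen_Ioo
  have hf_cd' : ContDiffOn ℝ ((2:ℕ∞) + 1) f (Set.Ioo 0 1) := by
    exact_mod_cast hf_cd
  rw [contDiffOn_succ_iff_deriv_of_isOpen hopen] at hf_cd'
  obtain ⟨hf_diff, -, hf'_cd⟩ := hf_cd'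
  have hf'_diff : DifferentiableOn ℝ (deriv f) (Set.Ioo 0 1) :=
    hf'_cd.differentiableOn (by norm_num)
  -- pointwise derivatives of f at interior points
  have hfd : ∀ q ∈ Set.Ioo (0:ℝ) 1, HasDerivAt f (deriv f q) q := fun q hq =>
    (hf_diff.differentiableAt (hopen.mem_nhds hq)).hasDerivAt
  have hf2d : ∀ q ∈ Set.Ioo (0:ℝ) 1, HasDerivAt (deriv f) (deriv (deriv f) q) q := fun q hq =>
    (hf'_diff.differentiableAt (hopen.mem_nhds hq)).hasDerivAt
  -- first derivative of Tw w f
  have key1 : ∀ p ∈ Set.Ioo (0:ℝ) 1,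
      HasDerivAt (Tw w f)
        ((w - 1) * f (phiW w p) + w / (1 + (w - 1) * p) * deriv f (phiW w p)) p := by
    intro p hp
    have hDp := Dpos hw hp.1.le hp.2.le
    have hq := phi_mem hw hp
    have hcomp := (hfd _ hq).comp p (phi_hasDeriv hDp)
    have h := (lin_hasDeriv w p).mul hcomp
    have hTw : Tw w f = fun p => (1 + (w - 1) * p) * f (phiW w p) := rfl
    rw [hTw]
    refine h.congr_deriv ?_
    simp only [Function.comp_apply]
    field_simp
  have hderiv1 : Set.EqOn (deriv (Tw w f))
      (fun p => (w - 1) * f (phiW w p) + w / (1 + (w - 1) * p) * deriv f (phiW w p))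
      (Set.Ioo 0 1) := fun p hp => (key1 p hp).deriv
  have key2 : ∀ p ∈ Set.Ioo (0:ℝ) 1,
      deriv (deriv (Tw w f)) p = w^2 / (1 + (w - 1) * p)^3 * deriv (deriv f) (phiW w p) := by
    intro p hp
    have hDp := Dpos hw hp.1.le hp.2.le
    have hq := phi_mem hw hp
    have hphi := phi_hasDeriv hDp
    have hF : HasDerivAt
        (fun p => (w - 1) * f (phiW w p) + w / (1 + (w - 1) * p) * deriv f (phiW w p))
        (w^2 / (1 + (w - 1) * p)^3 * deriv (deriv f) (phiW w p)) p := by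
      have h1 := ((hfd _ hq).comp p hphi).const_mul (w - 1)
      have hwd : HasDerivAt (fun p : ℝ => w / (1 + (w - 1) * p))
          (-(w * (w - 1)) / (1 + (w - 1) * p) ^ 2) p := by
        have h := (hasDerivAt_const p w).div (lin_hasDeriv w p) hDp.ne'
        refine h.congr_deriv ?_
        field_simp
        ring
      have h2 := hwd.mul ((hf2d _ hq).comp p hphi)
      have h := h1.add h2
      refine h.congr_deriv ?_
      simp only [Function.comp_apply]
      field_simp
      ring
    have hev : deriv (Tw w f) =ᶠ[nhds p]
        (fun p => (w - 1) * f (phiW w p) + w / (1 + (w - 1) * p) * deriv f (phiW w p)) :=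
      Filter.eventuallyEq_of_mem (hopen.mem_nhds hp) hderiv1
    rw [hev.deriv_eq, hF.deriv]
  have key3 : ∀ p ∈ Set.Ioo (0:ℝ) 1, deriv (deriv (Tw w f)) p < 0 := by
    intro p hp
    rw [key2 p hp]
    have hDp := Dpos hw hp.1.le hp.2.le
    exact mul_neg_of_pos_of_neg (div_pos (pow_pos hw 2) (pow_pos hDp 3))
      (hf_cc _ (phi_mem hw hp))
  refine ⟨key2, key3, ?_, ?_, key3⟩
  · -- continuity on Icc
    have hφc : ContinuousOn (phiW w) (Set.Icc 0 1) := by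
      show ContinuousOn (fun p => w * p / (1 + (w - 1) * p)) _
      exact ContinuousOn.div (by fun_prop) (by fun_prop)
        (fun p hp => (Dpos hw hp.1 hp.2).ne')
    exact ContinuousOn.mul (by fun_prop)
      (hf_cont.comp hφc (fun p hp => phi_mem' hw hp))
  · -- smoothness on Ioo
    have hφcd : ContDiffOn ℝ 3 (phiW w) (Set.Ioo 0 1) := by
      show ContDiffOn ℝ 3 (fun p => w * p / (1 + (w - 1) * p)) _
      exact ContDiffOn.div (by fun_prop) (by fun_prop)
        (fun p hp => (Dpos hw hp.1.le hp.2.le).ne')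
    exact ContDiffOn.mul (by fun_prop)
      (hf_cd.comp hφcd (fun p hp => phi_mem hw hp))
end

section
/- Let f, g be preimpurity functions and w > 0. If f''/g'' is monotone increasing on (0,1), then (T_w f)''/(T_w g)'' is monotone increasing on (0,1); indeed (T_w f)''(p)/(T_w g)''(p) = (f''/g'')(φ_w(p)). -/
lemma myDpos {w p : ℝ} (hw : 0 < w) (hp : p ∈ Set.Ioo (0:ℝ) 1) : 0 < 1 + (w - 1) * p := by
  nlinarith [hp.1, hp.2]

lemma myPhiMem {w p : ℝ} (hw : 0 < w) (hp : p ∈ Set.Ioo (0:ℝ) 1) :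
    phiW w p ∈ Set.Ioo (0:ℝ) 1 := by
  have hd := myDpos hw hp
  constructor
  · exact div_pos (mul_pos hw hp.1) hd
  · rw [phiW, div_lt_one hd]; nlinarith [hp.2]

lemma myPhiHasDerivAt (w p : ℝ) (hd : (1 + (w - 1) * p) ≠ 0) :
    HasDerivAt (phiW w) (w / (1 + (w - 1) * p) ^ 2) p := by
  have h1 : HasDerivAt (fun p : ℝ => w * p) w p := by
    simpa using (hasDerivAt_id p).const_mul w
  have h2 : HasDerivAt (fun p : ℝ => 1 + (w - 1) * p) (w - 1) p := by
    simpa using ((hasDerivAt_id p).const_mul (w - 1)).const_add 1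
  have h := h1.div h2 hd
  refine h.congr_deriv ?_
  field_simp
  ring

lemma myMulAux (a d w : ℝ) (hd : d ≠ 0) : d * (a * (w / d ^ 2)) = w * a / d := by
  field_simp

lemma myTwDeriv2 (f : ℝ → ℝ) (hf : Preimpurity f) (w : ℝ) (hw : 0 < w)
    (p : ℝ) (hp : p ∈ Set.Ioo (0:ℝ) 1) :
    deriv (deriv (Tw w f)) p
      = w ^ 2 / (1 + (w - 1) * p) ^ 3 * deriv (deriv f) (phiW w p) := by
  have hf3 : ContDiffOn ℝ 3 f (Set.Ioo 0 1) := hf.2.1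
  have hd1 : ContDiffOn ℝ 2 (deriv f) (Set.Ioo 0 1) :=
    hf3.deriv_of_isOpen isOpen_Ioo (by norm_num)
  -- first derivative of Tw on Ioo
  set G : ℝ → ℝ := fun q => (w - 1) * f (phiW w q) + w * deriv f (phiW w q) / (1 + (w - 1) * q)
    with hG
  have hTw' : ∀ q ∈ Set.Ioo (0:ℝ) 1, HasDerivAt (Tw w f) (G q) q := by
    intro q hq
    have hdq := myDpos hw hq
    have hφq := myPhiMem hw hq
    have hφ := myPhiHasDerivAt w q hdq.ne'
    have hfd : DifferentiableAt ℝ f (phiW w q) :=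
      ((hf3.differentiableOn (by norm_num)).differentiableAt (isOpen_Ioo.mem_nhds hφq))
    have hcomp : HasDerivAt (fun x => f (phiW w x))
        (deriv f (phiW w q) * (w / (1 + (w - 1) * q) ^ 2)) q :=
      (hfd.hasDerivAt).comp q hφ
    have h2 : HasDerivAt (fun x : ℝ => 1 + (w - 1) * x) (w - 1) q := by
      simpa using ((hasDerivAt_id q).const_mul (w - 1)).const_add 1
    have := h2.mul hcomp
    refine this.congr_deriv ?_
    rw [myMulAux _ _ _ hdq.ne']
  have hderivG : deriv (Tw w f) =ᶠ[nhds p] G := by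
    filter_upwards [isOpen_Ioo.mem_nhds hp] with q hq
    exact (hTw' q hq).deriv
  rw [hderivG.deriv_eq]
  -- now compute deriv G p
  have hdp := myDpos hw hp
  have hφp := myPhiMem hw hp
  have hφ := myPhiHasDerivAt w p hdp.ne'
  have hfd : DifferentiableAt ℝ f (phiW w p) :=
    ((hf3.differentiableOn (by norm_num)).differentiableAt (isOpen_Ioo.mem_nhds hφp))
  have hfd1 : DifferentiableAt ℝ (deriv f) (phiW w p) :=
    ((hd1.differentiableOn (by norm_num)).differentiableAt (isOpen_Ioo.mem_nhds hφp))
  have hcomp : HasDerivAt (fun x => f (phiW w x))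
      (deriv f (phiW w p) * (w / (1 + (w - 1) * p) ^ 2)) p :=
    (hfd.hasDerivAt).comp p hφ
  have hcomp1 : HasDerivAt (fun x => deriv f (phiW w x))
      (deriv (deriv f) (phiW w p) * (w / (1 + (w - 1) * p) ^ 2)) p :=
    (hfd1.hasDerivAt).comp p hφ
  have h2 : HasDerivAt (fun x : ℝ => 1 + (w - 1) * x) (w - 1) p := by
    simpa using ((hasDerivAt_id p).const_mul (w - 1)).const_add 1
  have hnum : HasDerivAt (fun x => w * deriv f (phiW w x))
      (w * (deriv (deriv f) (phiW w p) * (w / (1 + (w - 1) * p) ^ 2))) p :=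
    hcomp1.const_mul w
  have hterm2 := hnum.div h2 hdp.ne'
  have hterm1 := hcomp.const_mul (w - 1)
  have hGd := hterm1.add hterm2
  have : HasDerivAt G ((w - 1) * (deriv f (phiW w p) * (w / (1 + (w - 1) * p) ^ 2)) +
      (w * (deriv (deriv f) (phiW w p) * (w / (1 + (w - 1) * p) ^ 2)) * (1 + (w - 1) * p) -
        w * deriv f (phiW w p) * (w - 1)) / (1 + (w - 1) * p) ^ 2) p := hGd
  rw [this.deriv]
  field_simp [hdp.ne']
  ring

lemma myPhiMono {w : ℝ} (hw : 0 < w) {p q : ℝ} (hp : p ∈ Set.Ioo (0:ℝ) 1)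
    (hq : q ∈ Set.Ioo (0:ℝ) 1) (hpq : p ≤ q) : phiW w p ≤ phiW w q := by
  have hdp := myDpos hw hp
  have hdq := myDpos hw hq
  rw [phiW, phiW, div_le_div_iff₀ hdp hdq]
  nlinarith [mul_le_mul_of_nonneg_left hpq hw.le]

theorem stmt14 (f g : ℝ → ℝ) (hf : Preimpurity f) (hg : Preimpurity g)
    (w : ℝ) (hw : 0 < w)
    (hmono : MonotoneOn (fun p => deriv (deriv f) p / deriv (deriv g) p) (Set.Ioo 0 1)) :
    (∀ p ∈ Set.Ioo (0:ℝ) 1,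
      deriv (deriv (Tw w f)) p / deriv (deriv (Tw w g)) p
        = deriv (deriv f) (phiW w p) / deriv (deriv g) (phiW w p)) ∧
    MonotoneOn (fun p => deriv (deriv (Tw w f)) p / deriv (deriv (Tw w g)) p)
      (Set.Ioo 0 1) := by
  have key : ∀ p ∈ Set.Ioo (0:ℝ) 1,
      deriv (deriv (Tw w f)) p / deriv (deriv (Tw w g)) p
        = deriv (deriv f) (phiW w p) / deriv (deriv g) (phiW w p) := by
    intro p hp
    have hdp := myDpos hw hp
    have hc : w ^ 2 / (1 + (w - 1) * p) ^ 3 ≠ 0 :=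
      ne_of_gt (div_pos (pow_pos hw 2) (pow_pos hdp 3))
    rw [myTwDeriv2 f hf w hw p hp, myTwDeriv2 g hg w hw p hp,
      mul_div_mul_left _ _ hc]
  refine ⟨key, ?_⟩
  intro p hp q hq hpq
  simp only
  rw [key p hp, key q hq]
  exact hmono (myPhiMem hw hp) (myPhiMem hw hq) (myPhiMono hw hp hq hpq)
end

section
/- Let g(p) = 2p(1-p) (the Gini impurity) and for m in (0,1) let h_m(p) = p(1-p)/((-2m+1)p + m²). Then h_m = (1/(2(1-m)²))·T_w g where w = (1/m - 1)², i.e., h_m(p) = (1/(2(1-m)²))·(1+(w-1)p)·g(wp/(1+(w-1)p)) for all p in [0,1]. -/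
theorem stmt15 (m : ℝ) (hm : m ∈ Set.Ioo (0:ℝ) 1) :
    let g : ℝ → ℝ := fun p => 2 * p * (1 - p)
    let w : ℝ := (1/m - 1)^2
    ∀ p ∈ Set.Icc (0:ℝ) 1,
      p * (1 - p) / ((-2*m + 1) * p + m^2)
        = 1 / (2 * (1 - m)^2) * ((1 + (w - 1) * p) * g (w * p / (1 + (w - 1) * p))) := by
  intro g w p hp
  obtain ⟨hm0, hm1⟩ := hm
  obtain ⟨hp0, hp1⟩ := hp
  have hmne : m ≠ 0 := ne_of_gt hm0
  have hm1' : (1 - m) ≠ 0 := by intro h; nlinarith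
  have hD : (-2*m + 1) * p + m^2 > 0 := by
    nlinarith [mul_nonneg hp0 (sq_nonneg (1-m)),
      mul_nonneg (by linarith : (0:ℝ) ≤ 1-p) (sq_nonneg m),
      mul_pos hm0 hm0,
      mul_pos (mul_pos hm0 hm0) (mul_pos (by linarith : (0:ℝ) < 1-m) (by linarith : (0:ℝ) < 1-m))]
  have hDne : (-2*m + 1) * p + m^2 ≠ 0 := ne_of_gt hD
  have hw : w = (1-m)^2 / m^2 := by
    simp only [w]; field_simp
  have hden : 1 + (w - 1) * p = ((-2*m + 1) * p + m^2) / m^2 := by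
    rw [hw]; field_simp; ring
  have hval : w * p / (1 + (w - 1) * p) = (1-m)^2 * p / ((-2*m + 1) * p + m^2) := by
    rw [hden, hw]
    rw [div_div_eq_mul_div, div_mul_eq_mul_div, div_mul_eq_mul_div, div_div]
    rw [mul_comm (m^2) ((-2*m + 1) * p + m^2),
      mul_div_mul_right _ _ (pow_ne_zero 2 hmne)]
  have h1X : 1 - (1-m)^2 * p / ((-2*m + 1) * p + m^2)
      = (1-p) * m^2 / ((-2*m + 1) * p + m^2) := by
    rw [eq_div_iff hDne, sub_mul, one_mul, div_mul_cancel₀ _ hDne]; ring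
  simp only [g]
  rw [hval, hden, h1X]
  generalize hg : (-2*m + 1) * p + m^2 = d at hDne ⊢
  field_simp
end

section
/- Let f(p) = p - p^α for α > 1 (or f(p) = p^α - p for 0 < α < 1), and let H = f'''/f''. Then p(p-1)·H'(p) + (2p-1)·H(p) + 3 = α + 1 for all p in (0,1). Similarly for the entropy f(p) = -p·log p - (1-p)·log(1-p) this expression is identically 1, and for the Gini impurity f(p)=2p(1-p) it is identically 3 (interpreting H ≡ 0). In all cases the expression is nonnegative, so these functions respect class weighting. -/
open Real Set in
private lemma deriv_congr_open {f g : ℝ → ℝ} {s : Set ℝ} (hs : IsOpen s)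
    (h : ∀ x ∈ s, f x = g x) {p : ℝ} (hp : p ∈ s) : deriv f p = deriv g p :=
  Filter.EventuallyEq.deriv_eq (by filter_upwards [hs.mem_nhds hp] using h)

open Real Set in
private lemma powH (α : ℝ) (h0 : α ≠ 0) (h1 : α ≠ 1) {p : ℝ} (hp : p ∈ Set.Ioo (0:ℝ) 1) :
    (let f : ℝ → ℝ := fun p => p - p ^ α
     let H : ℝ → ℝ := fun p => deriv (deriv (deriv f)) p / deriv (deriv f) p
     p * (p - 1) * deriv H p + (2*p - 1) * H p + 3 = α + 1) := by
  intro f H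
  have h1' : α - 1 ≠ 0 := sub_ne_zero.mpr h1
  have d1 : ∀ x ∈ Ioi (0:ℝ), deriv f x = 1 - α * x ^ (α - 1) := fun x hx =>
    ((hasDerivAt_id' (x := x)).sub (Real.hasDerivAt_rpow_const (Or.inl (ne_of_gt hx)))).deriv
  have d2 : ∀ x ∈ Ioi (0:ℝ), deriv (deriv f) x = -(α * ((α-1) * x ^ (α-2))) := by
    intro x hx
    rw [deriv_congr_open isOpen_Ioi d1 hx,
      ((hasDerivAt_const x (1:ℝ)).fun_sub
        ((Real.hasDerivAt_rpow_const (p := α - 1) (Or.inl (ne_of_gt hx))).const_mul α)).deriv,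
      show α - 1 - 1 = α - 2 by ring]
    ring
  have d3 : ∀ x ∈ Ioi (0:ℝ), deriv (deriv (deriv f)) x = -(α * ((α-1) * ((α-2) * x ^ (α-3)))) := by
    intro x hx
    rw [deriv_congr_open isOpen_Ioi d2 hx,
      ((((Real.hasDerivAt_rpow_const (p := α - 2) (Or.inl (ne_of_gt hx))).const_mul
        (α-1)).const_mul α).fun_neg).deriv,
      show α - 2 - 1 = α - 3 by ring]
  have hH : ∀ x ∈ Ioi (0:ℝ), H x = (α - 2) * x⁻¹ := by
    intro x hx
    have hx' : (0:ℝ) < x := hx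
    have hx2 : x ^ (α-2) ≠ 0 := (Real.rpow_pos_of_pos hx' _).ne'
    show deriv (deriv (deriv f)) x / deriv (deriv f) x = _
    rw [d3 x hx, d2 x hx, show α - 3 = α - 2 + (-1) by ring, Real.rpow_add hx',
      Real.rpow_neg_one]
    field_simp
  have dH : deriv H p = (α - 2) * -(p^2)⁻¹ := by
    rw [deriv_congr_open isOpen_Ioi hH hp.1]
    exact ((hasDerivAt_inv (ne_of_gt hp.1)).const_mul (α-2)).deriv
  rw [dH, hH p hp.1]
  have hp0 : p ≠ 0 := ne_of_gt hp.1
  field_simp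
  ring

open Real Set in
private lemma entH {p : ℝ} (hp : p ∈ Set.Ioo (0:ℝ) 1) :
    (let f : ℝ → ℝ := fun p => -p * Real.log p - (1 - p) * Real.log (1 - p)
     let H : ℝ → ℝ := fun p => deriv (deriv (deriv f)) p / deriv (deriv f) p
     p * (p - 1) * deriv H p + (2*p - 1) * H p + 3 = 1) := by
  intro f H
  have hs : IsOpen (Ioo (0:ℝ) 1) := isOpen_Ioo
  have key : ∀ x ∈ Ioo (0:ℝ) 1, x ≠ 0 ∧ (1:ℝ) - x ≠ 0 := fun x hx =>
    ⟨ne_of_gt hx.1, sub_ne_zero.mpr (ne_of_gt hx.2)⟩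
  have hu : ∀ x : ℝ, HasDerivAt (fun p : ℝ => 1 - p) (-1) x := fun x => by
    simpa using (hasDerivAt_id x).const_sub 1
  have hlog1 : ∀ x ∈ Ioo (0:ℝ) 1, HasDerivAt (fun p : ℝ => Real.log (1-p)) ((1-x)⁻¹ * -1) x := by
    intro x hx
    exact (Real.hasDerivAt_log (key x hx).2).comp x (hu x)
  have d1 : ∀ x ∈ Ioo (0:ℝ) 1, deriv f x = Real.log (1-x) - Real.log x := by
    intro x hx
    obtain ⟨hx0, hx1⟩ := key x hx
    have hA : HasDerivAt (fun p : ℝ => -p * Real.log p) (-1 * Real.log x + -x * x⁻¹) x :=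
      (hasDerivAt_id x).neg.mul (Real.hasDerivAt_log hx0)
    have hB : HasDerivAt (fun p : ℝ => (1-p) * Real.log (1-p))
        (-1 * Real.log (1-x) + (1-x) * ((1-x)⁻¹ * -1)) x := (hu x).mul (hlog1 x hx)
    rw [(hA.fun_sub hB).deriv]
    field_simp
    ring
  have d2 : ∀ x ∈ Ioo (0:ℝ) 1, deriv (deriv f) x = -(1-x)⁻¹ - x⁻¹ := by
    intro x hx
    obtain ⟨hx0, hx1⟩ := key x hx
    rw [deriv_congr_open hs d1 hx, ((hlog1 x hx).fun_sub (Real.hasDerivAt_log hx0)).deriv]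
    ring
  have d3 : ∀ x ∈ Ioo (0:ℝ) 1, deriv (deriv (deriv f)) x = (x^2)⁻¹ - ((1-x)^2)⁻¹ := by
    intro x hx
    obtain ⟨hx0, hx1⟩ := key x hx
    have hinv1 : HasDerivAt (fun p : ℝ => (1-p)⁻¹) (-(((1-x))^2)⁻¹ * -1) x :=
      (hasDerivAt_inv hx1).comp x (hu x)
    rw [deriv_congr_open hs d2 hx, (hinv1.fun_neg.fun_sub (hasDerivAt_inv hx0)).deriv]
    ring
  have hden : ∀ x ∈ Ioo (0:ℝ) 1, -(1-x)⁻¹ - x⁻¹ ≠ 0 := by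
    intro x hx
    have h1 : 0 < (1-x)⁻¹ := inv_pos.mpr (by linarith [hx.2])
    have h2 : 0 < x⁻¹ := inv_pos.mpr hx.1
    intro h; nlinarith
  have hH : ∀ x ∈ Ioo (0:ℝ) 1, H x = (2*x-1) * (x*(1-x))⁻¹ := by
    intro x hx
    obtain ⟨hx0, hx1⟩ := key x hx
    show deriv (deriv (deriv f)) x / deriv (deriv f) x = _
    rw [d3 x hx, d2 x hx, div_eq_iff (hden x hx)]
    field_simp
    ring
  obtain ⟨hp0, hp1⟩ := key p hp
  have hpp : p * (1-p) ≠ 0 := mul_ne_zero hp0 hp1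
  have dH : deriv H p = 2 * (p*(1-p))⁻¹ + (2*p-1) * (-((p*(1-p))^2)⁻¹ * (1*(1-p) + p*(-1))) := by
    rw [deriv_congr_open hs hH hp]
    have hnum : HasDerivAt (fun x : ℝ => 2*x-1) (2*1) p := ((hasDerivAt_id p).const_mul 2).sub_const 1
    have hu2 : HasDerivAt (fun x : ℝ => x*(1-x)) (1*(1-p) + p*(-1)) p :=
      (hasDerivAt_id p).mul (hu p)
    have hinv : HasDerivAt (fun x : ℝ => (x*(1-x))⁻¹) (-((p*(1-p))^2)⁻¹ * (1*(1-p) + p*(-1))) p :=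
      (hasDerivAt_inv hpp).comp p hu2
    have := (hnum.fun_mul hinv).deriv
    rw [this]; ring
  rw [dH, hH p hp]
  field_simp
  ring

open Real Set in
private lemma giniH {p : ℝ} (hp : p ∈ Set.Ioo (0:ℝ) 1) :
    (let f : ℝ → ℝ := fun p => 2 * p * (1 - p)
     let H : ℝ → ℝ := fun p => deriv (deriv (deriv f)) p / deriv (deriv f) p
     p * (p - 1) * deriv H p + (2*p - 1) * H p + 3 = 3) := by
  intro f H
  have hu : ∀ x : ℝ, HasDerivAt (fun p : ℝ => 1 - p) (-1) x := fun x => by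
    simpa using (hasDerivAt_id x).const_sub 1
  have h1 : deriv f = fun x => 2 - 4 * x := by
    funext x
    rw [(((hasDerivAt_id' (x:=x)).const_mul 2).fun_mul (hu x)).deriv]
    ring
  have h2 : deriv (deriv f) = fun _ => (-4 : ℝ) := by
    rw [h1]; funext x
    rw [((hasDerivAt_const x (2:ℝ)).fun_sub ((hasDerivAt_id' (x:=x)).const_mul 4)).deriv]
    ring
  have hH : H = fun _ => (0:ℝ) := by
    funext x
    show deriv (deriv (deriv f)) x / deriv (deriv f) x = 0
    rw [h2]
    simp
  rw [hH]
  simp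

open Real Set in
private lemma negH (f : ℝ → ℝ) (g : ℝ → ℝ) (hfg : g = fun x => -(f x)) :
    (fun p => deriv (deriv (deriv g)) p / deriv (deriv g) p)
      = fun p => deriv (deriv (deriv f)) p / deriv (deriv f) p := by
  have h1 : deriv g = fun x => -(deriv f x) := by
    funext x; rw [hfg]; exact deriv.neg
  have h2 : deriv (deriv g) = fun x => -(deriv (deriv f) x) := by
    funext x; rw [h1]; exact deriv.neg
  have h3 : deriv (deriv (deriv g)) = fun x => -(deriv (deriv (deriv f)) x) := by
    funext x; rw [h2]; exact deriv.neg
  funext p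
  rw [h3, h2, neg_div_neg_eq]

open Real in
theorem stmt16 :
    (∀ α : ℝ, 1 < α →
      let f : ℝ → ℝ := fun p => p - p ^ α
      let H : ℝ → ℝ := fun p => deriv (deriv (deriv f)) p / deriv (deriv f) p
      ∀ p ∈ Set.Ioo (0:ℝ) 1,
        p * (p - 1) * deriv H p + (2*p - 1) * H p + 3 = α + 1 ∧
        0 ≤ p * (p - 1) * deriv H p + (2*p - 1) * H p + 3) ∧
    (∀ α : ℝ, 0 < α → α < 1 →
      let f : ℝ → ℝ := fun p => p ^ α - p
      let H : ℝ → ℝ := fun p => deriv (deriv (deriv f)) p / deriv (deriv f) p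
      ∀ p ∈ Set.Ioo (0:ℝ) 1,
        p * (p - 1) * deriv H p + (2*p - 1) * H p + 3 = α + 1 ∧
        0 ≤ p * (p - 1) * deriv H p + (2*p - 1) * H p + 3) ∧
    (let f : ℝ → ℝ := fun p => -p * Real.log p - (1 - p) * Real.log (1 - p)
     let H : ℝ → ℝ := fun p => deriv (deriv (deriv f)) p / deriv (deriv f) p
     ∀ p ∈ Set.Ioo (0:ℝ) 1,
        p * (p - 1) * deriv H p + (2*p - 1) * H p + 3 = 1 ∧
        0 ≤ p * (p - 1) * deriv H p + (2*p - 1) * H p + 3) ∧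
    (let f : ℝ → ℝ := fun p => 2 * p * (1 - p)
     let H : ℝ → ℝ := fun p => deriv (deriv (deriv f)) p / deriv (deriv f) p
     ∀ p ∈ Set.Ioo (0:ℝ) 1,
        p * (p - 1) * deriv H p + (2*p - 1) * H p + 3 = 3 ∧
        0 ≤ p * (p - 1) * deriv H p + (2*p - 1) * H p + 3) := by
  refine ⟨?_, ?_, ?_, ?_⟩
  · intro α hα f H p hp
    have key : p * (p - 1) * deriv H p + (2*p - 1) * H p + 3 = α + 1 :=
      powH α (by linarith) (by linarith) hp
    exact ⟨key, by rw [key]; linarith⟩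
  · intro α hα0 hα1 f H p hp
    have hHeq : H = fun q => deriv (deriv (deriv (fun p : ℝ => p - p ^ α))) q /
        deriv (deriv (fun p : ℝ => p - p ^ α)) q :=
      negH (fun p : ℝ => p - p ^ α) (fun p : ℝ => p ^ α - p) (funext fun x => by ring)
    have key : p * (p - 1) * deriv H p + (2*p - 1) * H p + 3 = α + 1 := by
      rw [hHeq]
      exact powH α (ne_of_gt hα0) (ne_of_lt hα1) hp
    exact ⟨key, by rw [key]; linarith⟩
  · intro f H p hp
    have key : p * (p - 1) * deriv H p + (2*p - 1) * H p + 3 = 1 := entH hp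
    exact ⟨key, by rw [key]; norm_num⟩
  · intro f H p hp
    have key : p * (p - 1) * deriv H p + (2*p - 1) * H p + 3 = 3 := giniH hp
    exact ⟨key, by rw [key]; norm_num⟩
end
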